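/- arXiv:2512.05829 — 5 statements merged into one kernel-verified Lean document; each statement's English description precedes it below -/
import Mathlib

section
/- Let t > 0 and let ψ : ℂ → ℂ be continuous with lim_{A→∞} sup_{|λ|=A} |ψ(λ)| = 0. Then (1) lim_{R→∞} ∫_{θ=−π/8}^{π/8} (Re^{iθ})³ e^{−(Re^{iθ})⁴ t} ψ(Re^{iθ}) · iRe^{iθ} dθ = 0, and (2) lim_{R→∞} ∫_{θ=π/8}^{3π/8} (Re^{iθ})³ e^{(Re^{iθ})⁴ t} ψ(Re^{iθ}) · iRe^{iθ} dθ = 0. -/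
open MeasureTheory Filter Complex Real Set Topology

/-! On the arc `λ = R e^{iθ}` the integrand has modulus `R⁴ e^{∓R⁴ t cos 4θ} |ψ(λ)|`. On both arcs
the exponent is `-R⁴ t sin (4θ + d)` with `4θ + d` running over `[0, π]` (`d = π/2`, resp. `-π/2`),
so Jordan's inequality `sin x ≥ 2x/π` bounds `∫ R⁴ e^{-R⁴ t sin (4θ + d)} dθ` by `π / (4t)`,
uniformly in `R`. The integrals are therefore `O(sup_{|λ| = R} |ψ|)`, which tends to `0`. -/

theorem integral_zero_pi_div_two_exp_neg_mul_sin_le {M : ℝ} (hM : 0 < M) :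
    ∫ x in (0)..(π / 2), rexp (-(M * Real.sin x)) ≤ π / (2 * M) := by
  have hπ := pi_pos
  calc ∫ x in (0)..(π / 2), rexp (-(M * Real.sin x))
      ≤ ∫ x in (0)..(π / 2), rexp (-(2 * M / π) * x) := by
        refine intervalIntegral.integral_mono_on pi_div_two_pos.le
          ((by fun_prop : Continuous _).intervalIntegrable _ _)
          ((by fun_prop : Continuous _).intervalIntegrable _ _) fun x hx => exp_le_exp.2 ?_
        have hsin := mul_le_sin hx.1 hx.2
        have hfactor : 2 * M / π * x = M * (2 / π * x) := by ring
        nlinarith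
    _ = π / (2 * M) * (1 - rexp (-M)) := by
        rw [intervalIntegral.integral_comp_mul_left rexp (by simp; positivity), integral_exp,
          mul_zero, Real.exp_zero, smul_eq_mul]
        field_simp
        ring
    _ ≤ π / (2 * M) := mul_le_of_le_one_right (by positivity) (by linarith [exp_pos (-M)])

/-- Jordan's lemma. -/
theorem integral_zero_pi_exp_neg_mul_sin_le {M : ℝ} (hM : 0 < M) :
    ∫ x in (0)..π, rexp (-(M * Real.sin x)) ≤ π / M := by
  have hint : ∀ a b, IntervalIntegrable (fun x => rexp (-(M * Real.sin x))) volume a b :=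
    fun a b => (by fun_prop : Continuous _).intervalIntegrable a b
  have hsymm : ∫ x in (π / 2)..π, rexp (-(M * Real.sin x))
      = ∫ x in (0)..(π / 2), rexp (-(M * Real.sin x)) := by
    calc ∫ x in (π / 2)..π, rexp (-(M * Real.sin x))
        = ∫ x in (0)..(π / 2), rexp (-(M * Real.sin (π - x))) := by
          rw [intervalIntegral.integral_comp_sub_left (fun x => rexp (-(M * Real.sin x)))]
          norm_num
          ring_nf
      _ = _ := by simp only [Real.sin_pi_sub]
  rw [← intervalIntegral.integral_add_adjacent_intervals (hint 0 (π / 2)) (hint _ π), hsymm]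
  linarith [integral_zero_pi_div_two_exp_neg_mul_sin_le hM,
    show π / (2 * M) * 2 = π / M by field_simp]

theorem integral_exp_neg_mul_sin_four_mul_add_le {M a b d : ℝ} (hM : 0 < M)
    (ha : 4 * a + d = 0) (hb : 4 * b + d = π) :
    ∫ θ in a..b, rexp (-(M * Real.sin (4 * θ + d))) ≤ π / (4 * M) := by
  rw [intervalIntegral.integral_comp_mul_add (fun x => rexp (-(M * Real.sin x))) four_ne_zero,
    ha, hb, smul_eq_mul]
  calc 4⁻¹ * ∫ x in (0)..π, rexp (-(M * Real.sin x))
      ≤ 4⁻¹ * (π / M) := by gcongr; exact integral_zero_pi_exp_neg_mul_sin_le hM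
    _ = π / (4 * M) := by field_simp

theorem tendsto_intervalIntegral_zero_of_norm_le_mul {ι E : Type*} [NormedAddCommGroup E]
    [NormedSpace ℝ E] {l : Filter ι} {a b C : ℝ} (hab : a ≤ b) {f : ι → ℝ → E}
    {g : ι → ℝ → ℝ} (hg : ∀ᶠ i in l, IntervalIntegrable (g i) volume a b ∧ ∫ x in a..b, g i x ≤ C)
    (hf : ∀ ε > 0, ∀ᶠ i in l, ∀ x, ‖f i x‖ ≤ ε * g i x) :
    Tendsto (fun i => ∫ x in a..b, f i x) l (𝓝 0) := by
  rw [NormedAddGroup.tendsto_nhds_zero]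
  intro ε hε
  have hε' : 0 < ε / (|C| + 1) := by positivity
  filter_upwards [hg, hf _ hε'] with i ⟨hint, hC⟩ hfi
  calc ‖∫ x in a..b, f i x‖
      ≤ ∫ x in a..b, ε / (|C| + 1) * g i x :=
        intervalIntegral.norm_integral_le_of_norm_le hab (ae_of_all _ fun x _ => hfi x)
          (hint.const_mul _)
    _ = ε / (|C| + 1) * ∫ x in a..b, g i x := intervalIntegral.integral_const_mul _ _
    _ ≤ ε / (|C| + 1) * |C| := by gcongr; exact hC.trans (le_abs_self C)
    _ < ε := by
        rw [div_mul_eq_mul_div, div_lt_iff₀ (by positivity)]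
        nlinarith

theorem norm_ofReal_mul_exp_I_mul {R : ℝ} (hR : 0 ≤ R) (θ : ℝ) :
    ‖(R : ℂ) * cexp (I * θ)‖ = R := by
  rw [norm_mul, norm_exp_I_mul_ofReal, norm_real, Real.norm_of_nonneg hR, mul_one]

theorem re_ofReal_mul_exp_I_mul_pow_four (R θ : ℝ) :
    (((R : ℂ) * cexp (I * θ)) ^ 4).re = R ^ 4 * Real.cos (4 * θ) := by
  have h : ((4 : ℕ) : ℂ) * (I * θ) = ((4 * θ : ℝ) : ℂ) * I := by push_cast; ring
  rw [mul_pow, ← Complex.exp_nat_mul, h, ← ofReal_pow, re_ofReal_mul, exp_ofReal_mul_I_re]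

theorem norm_arc_integrand {R : ℝ} (hR : 0 ≤ R) (θ : ℝ) (E w : ℂ) :
    ‖((R : ℂ) * cexp (I * θ)) ^ 3 * cexp E * w * (I * R * cexp (I * θ))‖
      = R ^ 4 * rexp E.re * ‖w‖ := by
  rw [mul_assoc I, norm_mul, norm_mul, norm_mul, norm_mul, norm_pow,
    norm_ofReal_mul_exp_I_mul hR, norm_exp, norm_I]
  ring

theorem tendsto_arc_integral_zero {t a b d : ℝ} (ht : 0 < t) (ha : 4 * a + d = 0)
    (hb : 4 * b + d = π) {ψ : ℂ → ℂ}
    (hdecay : ∀ ε : ℝ, 0 < ε → ∃ A₀ : ℝ, ∀ A : ℝ, A₀ ≤ A → ∀ l : ℂ, ‖l‖ = A → ‖ψ l‖ ≤ ε)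
    {E : ℝ → ℝ → ℂ} (hE : ∀ R θ, (E R θ).re = -(R ^ 4 * t * Real.sin (4 * θ + d))) :
    Tendsto (fun R : ℝ => ∫ θ in a..b, ((R : ℂ) * cexp (I * θ)) ^ 3 * cexp (E R θ)
      * ψ (R * cexp (I * θ)) * (I * R * cexp (I * θ))) atTop (𝓝 0) := by
  refine tendsto_intervalIntegral_zero_of_norm_le_mul (by linarith [pi_pos])
    (g := fun R θ => R ^ 4 * rexp (-(R ^ 4 * t * Real.sin (4 * θ + d)))) (C := π / (4 * t))
    ?_ ?_
  · filter_upwards [eventually_gt_atTop 0] with R hR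
    refine ⟨(by fun_prop : Continuous _).intervalIntegrable _ _, ?_⟩
    rw [intervalIntegral.integral_const_mul]
    calc R ^ 4 * ∫ θ in a..b, rexp (-(R ^ 4 * t * Real.sin (4 * θ + d)))
        ≤ R ^ 4 * (π / (4 * (R ^ 4 * t))) := by
          gcongr; exact integral_exp_neg_mul_sin_four_mul_add_le (by positivity) ha hb
      _ = π / (4 * t) := by field_simp
  · intro ε hε
    obtain ⟨A₀, hA₀⟩ := hdecay ε hε
    filter_upwards [eventually_ge_atTop (max A₀ 0)] with R hR θ
    have hψ := hA₀ R (le_of_max_le_left hR) _ (norm_ofReal_mul_exp_I_mul (le_of_max_le_right hR) θ)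
    rw [norm_arc_integrand (le_of_max_le_right hR), hE, mul_comm ε]
    gcongr

theorem stmt2_general (t : ℝ) (ht : 0 < t) (ψ : ℂ → ℂ)
    (hdecay : ∀ ε : ℝ, 0 < ε → ∃ A₀ : ℝ, ∀ A : ℝ, A₀ ≤ A → ∀ l : ℂ, ‖l‖ = A → ‖ψ l‖ ≤ ε) :
    Tendsto (fun R : ℝ => ∫ θ in (-(π/8))..(π/8),
        ((R:ℂ) * Complex.exp (Complex.I * (θ:ℂ))) ^ 3
          * Complex.exp (-((R:ℂ) * Complex.exp (Complex.I * (θ:ℂ))) ^ 4 * (t:ℂ))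
          * ψ ((R:ℂ) * Complex.exp (Complex.I * (θ:ℂ)))
          * (Complex.I * (R:ℂ) * Complex.exp (Complex.I * (θ:ℂ)))) atTop (𝓝 0)
    ∧ Tendsto (fun R : ℝ => ∫ θ in (π/8)..(3*π/8),
        ((R:ℂ) * Complex.exp (Complex.I * (θ:ℂ))) ^ 3
          * Complex.exp (((R:ℂ) * Complex.exp (Complex.I * (θ:ℂ))) ^ 4 * (t:ℂ))
          * ψ ((R:ℂ) * Complex.exp (Complex.I * (θ:ℂ)))
          * (Complex.I * (R:ℂ) * Complex.exp (Complex.I * (θ:ℂ)))) atTop (𝓝 0) := by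
  constructor
  · refine tendsto_arc_integral_zero ht (d := π / 2) (by ring) (by ring) hdecay fun R θ => ?_
    rw [neg_mul, neg_re, re_mul_ofReal, re_ofReal_mul_exp_I_mul_pow_four, Real.sin_add_pi_div_two]
    ring
  · refine tendsto_arc_integral_zero ht (d := -(π / 2)) (by ring) (by ring) hdecay fun R θ => ?_
    rw [re_mul_ofReal, re_ofReal_mul_exp_I_mul_pow_four, ← sub_eq_add_neg, Real.sin_sub_pi_div_two]
    ring

/-- Jordan-type lemmas for the dispersion relation `ω(λ) = λ⁴`,
over arcs of the circle `|λ| = R` parametrized by `λ = R e^{iθ}`, `dλ = iRe^{iθ} dθ`. -/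
theorem stmt2 (t : ℝ) (ht : 0 < t) (ψ : ℂ → ℂ) (hcont : Continuous ψ)
    (hdecay : ∀ ε : ℝ, 0 < ε → ∃ A₀ : ℝ, ∀ A : ℝ, A₀ ≤ A → ∀ l : ℂ, ‖l‖ = A → ‖ψ l‖ ≤ ε) :
    Tendsto (fun R : ℝ => ∫ θ in (-(π/8))..(π/8),
        ((R:ℂ) * Complex.exp (Complex.I * (θ:ℂ))) ^ 3
          * Complex.exp (-((R:ℂ) * Complex.exp (Complex.I * (θ:ℂ))) ^ 4 * (t:ℂ))
          * ψ ((R:ℂ) * Complex.exp (Complex.I * (θ:ℂ)))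
          * (Complex.I * (R:ℂ) * Complex.exp (Complex.I * (θ:ℂ)))) atTop (𝓝 0)
    ∧ Tendsto (fun R : ℝ => ∫ θ in (π/8)..(3*π/8),
        ((R:ℂ) * Complex.exp (Complex.I * (θ:ℂ))) ^ 3
          * Complex.exp (((R:ℂ) * Complex.exp (Complex.I * (θ:ℂ))) ^ 4 * (t:ℂ))
          * ψ ((R:ℂ) * Complex.exp (Complex.I * (θ:ℂ)))
          * (Complex.I * (R:ℂ) * Complex.exp (Complex.I * (θ:ℂ)))) atTop (𝓝 0) :=
  stmt2_general t ht ψ hdecay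
end

section
/- Let g ∈ C^∞([0,∞)) and t₀ > 0. Then there is a constant C > 0 such that | e^{−λ⁴ t} ∫₀^t e^{λ⁴ τ} g(τ) dτ | ≤ C/|λ|⁴ for all λ ∈ ℂ with |λ| ≥ 1 and Re(λ⁴) ≥ 0 and all 0 ≤ t ≤ t₀. -/
open MeasureTheory Filter Complex Real Set Topology

noncomputable section

/-- The time transform `g̃(ω,t) = ∫₀^t e^{ωτ} g(τ) dτ`. -/
def ttr (g : ℝ → ℂ) (w : ℂ) (t : ℝ) : ℂ := ∫ τ in (0:ℝ)..t, Complex.exp (w * τ) * g τ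

/-- the uniform decay estimate (2.6):
`|e^{-λ⁴ t} g̃(λ⁴,t)| ≤ C/|λ|⁴` for `|λ| ≥ 1`, `Re(λ⁴) ≥ 0`, `0 ≤ t ≤ t₀`. -/
theorem stmt4 (g : ℝ → ℂ) (hg : ContDiff ℝ (⊤ : ℕ∞) g) (t₀ : ℝ) (ht₀ : 0 < t₀) :
    ∃ C : ℝ, 0 < C ∧ ∀ l : ℂ, 1 ≤ ‖l‖ → 0 ≤ ((l ^ 4).re) → ∀ t : ℝ, 0 ≤ t → t ≤ t₀ →
      ‖Complex.exp (-(l ^ 4) * (t:ℂ)) * ttr g (l ^ 4) t‖ ≤ C / ‖l‖ ^ 4 := by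
  have hgc : Continuous g := hg.continuous
  have hg'c : Continuous (deriv g) := hg.continuous_deriv (by simp)
  obtain ⟨M, hM⟩ := (isCompact_Icc : IsCompact (Icc (0:ℝ) t₀)).exists_bound_of_continuousOn
    hgc.continuousOn
  obtain ⟨M', hM'⟩ := (isCompact_Icc : IsCompact (Icc (0:ℝ) t₀)).exists_bound_of_continuousOn
    hg'c.continuousOn
  have hM0 : 0 ≤ M := le_trans (norm_nonneg _) (hM 0 ⟨le_refl _, ht₀.le⟩)
  have hM'0 : 0 ≤ M' := le_trans (norm_nonneg _) (hM' 0 ⟨le_refl _, ht₀.le⟩)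
  refine ⟨2 * M + t₀ * M' + 1, by positivity, ?_⟩
  intro l hl hre t ht ht0
  set ω : ℂ := l ^ 4 with hωdef
  have hωnorm : ‖ω‖ = ‖l‖ ^ 4 := by simp [hωdef]
  have hωpos : 0 < ‖ω‖ := by rw [hωnorm]; positivity
  have hω : ω ≠ 0 := by intro h; rw [h] at hωpos; simp at hωpos
  -- derivatives
  have hu : ∀ τ : ℝ, HasDerivAt g (deriv g τ) τ :=
    fun τ => (hg.differentiable (by simp) τ).hasDerivAt
  have hv : ∀ τ : ℝ, HasDerivAt (fun s : ℝ => Complex.exp (ω * s) / ω)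
      (Complex.exp (ω * τ)) τ := by
    intro τ
    have h1 : HasDerivAt (fun z : ℂ => Complex.exp (ω * z) / ω)
        (Complex.exp (ω * τ)) (τ:ℂ) := by
      have := (((hasDerivAt_id ((τ:ℝ):ℂ)).const_mul ω).cexp).div_const ω
      simpa [mul_div_cancel_right₀ _ hω] using this
    simpa using h1.comp_ofReal
  have hexpc : Continuous fun τ : ℝ => Complex.exp (ω * τ) := by fun_prop
  have hibp : (∫ τ in (0:ℝ)..t, g τ * Complex.exp (ω * τ))
      = g t * (Complex.exp (ω * (t:ℝ)) / ω) - g 0 * (Complex.exp (ω * ((0:ℝ):ℂ)) / ω)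
        - ∫ τ in (0:ℝ)..t, deriv g τ * (Complex.exp (ω * τ) / ω) :=
    intervalIntegral.integral_mul_deriv_eq_deriv_mul (fun τ _ => hu τ) (fun τ _ => hv τ)
      (hg'c.intervalIntegrable _ _) (hexpc.intervalIntegrable _ _)
  have httr : ttr g ω t = g t * (Complex.exp (ω * t) / ω)
      - g 0 * (Complex.exp (ω * ((0:ℝ):ℂ)) / ω)
      - ∫ τ in (0:ℝ)..t, deriv g τ * (Complex.exp (ω * τ) / ω) := by
    rw [ttr, ← hibp]
    congr 1; ext τ; ring
  have hnormexp : ∀ z : ℂ, ‖Complex.exp z‖ = Real.exp z.re := by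
    intro z; simp [Complex.norm_exp]
  have key : Complex.exp (-ω * (t:ℂ)) * ttr g ω t
      = Complex.exp (-ω * t) * (g t * (Complex.exp (ω * t) / ω))
        - Complex.exp (-ω * t) * (g 0 * (Complex.exp (ω * ((0:ℝ):ℂ)) / ω))
        - ∫ τ in (0:ℝ)..t, Complex.exp (-ω * t) * (deriv g τ * (Complex.exp (ω * τ) / ω)) := by
    rw [httr, intervalIntegral.integral_const_mul]; ring
  rw [key]
  have hcc : Complex.exp (-ω * t) * Complex.exp (ω * t) = 1 := by
    rw [← Complex.exp_add]; ring_nf; exact Complex.exp_zero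
  have h1 : ‖Complex.exp (-ω * t) * (g t * (Complex.exp (ω * t) / ω))‖ ≤ M / ‖ω‖ := by
    have heq : Complex.exp (-ω * t) * (g t * (Complex.exp (ω * t) / ω)) = g t / ω := by
      calc Complex.exp (-ω * t) * (g t * (Complex.exp (ω * t) / ω))
          = g t * (Complex.exp (-ω * t) * Complex.exp (ω * t)) / ω := by ring
        _ = g t / ω := by rw [hcc, mul_one]
    rw [heq, norm_div]
    exact div_le_div_of_nonneg_right (hM t ⟨ht, ht0⟩) hωpos.le
  have h2 : ‖Complex.exp (-ω * t) * (g 0 * (Complex.exp (ω * ((0:ℝ):ℂ)) / ω))‖ ≤ M / ‖ω‖ := by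
    rw [norm_mul, norm_mul, norm_div, hnormexp, hnormexp]
    have e2 : Real.exp ((-ω * (t:ℂ)).re) ≤ 1 := by
      rw [Real.exp_le_one_iff]
      have : ((-ω * (t:ℂ)).re) = -(ω.re * t) := by simp
      rw [this]
      nlinarith [mul_nonneg hre ht]
    have e3 : Real.exp ((ω * ((0:ℝ):ℂ)).re) = 1 := by simp
    rw [e3]
    calc Real.exp ((-ω * (t:ℂ)).re) * (‖g 0‖ * (1 / ‖ω‖))
        ≤ 1 * (M * (1 / ‖ω‖)) := by
          apply mul_le_mul e2 _ (by positivity) zero_le_one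
          exact mul_le_mul_of_nonneg_right (hM 0 ⟨le_refl _, ht₀.le⟩) (by positivity)
      _ = M / ‖ω‖ := by ring
  have h3 : ‖∫ τ in (0:ℝ)..t, Complex.exp (-ω * t) * (deriv g τ * (Complex.exp (ω * τ) / ω))‖
      ≤ t₀ * M' / ‖ω‖ := by
    have hb : ∀ τ ∈ Set.uIoc (0:ℝ) t,
        ‖Complex.exp (-ω * t) * (deriv g τ * (Complex.exp (ω * τ) / ω))‖ ≤ M' / ‖ω‖ := by
      intro τ hτ
      rw [Set.uIoc_of_le ht] at hτ
      rw [norm_mul, norm_mul, norm_div, hnormexp, hnormexp]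
      have hexple : Real.exp ((-ω * (t:ℂ)).re) * Real.exp ((ω * (τ:ℝ)).re) ≤ 1 := by
        rw [← Real.exp_add, Real.exp_le_one_iff]
        have e1 : ((-ω * (t:ℂ)).re) = -(ω.re * t) := by simp
        have e2 : ((ω * ((τ:ℝ):ℂ)).re) = ω.re * τ := by simp
        rw [e1, e2]
        nlinarith [mul_nonneg hre (sub_nonneg.mpr hτ.2)]
      have hgτ : ‖deriv g τ‖ ≤ M' := hM' τ ⟨hτ.1.le, hτ.2.trans ht0⟩
      calc Real.exp ((-ω * (t:ℂ)).re) * (‖deriv g τ‖ * (Real.exp ((ω * (τ:ℝ)).re) / ‖ω‖))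
          = (Real.exp ((-ω * (t:ℂ)).re) * Real.exp ((ω * (τ:ℝ)).re)) * ‖deriv g τ‖ / ‖ω‖ := by
            ring
        _ ≤ 1 * M' / ‖ω‖ := by
            apply div_le_div_of_nonneg_right _ hωpos.le
            apply mul_le_mul hexple hgτ (norm_nonneg _) zero_le_one
        _ = M' / ‖ω‖ := by ring
    calc ‖∫ τ in (0:ℝ)..t, Complex.exp (-ω * t) * (deriv g τ * (Complex.exp (ω * τ) / ω))‖
        ≤ M' / ‖ω‖ * |t - 0| := intervalIntegral.norm_integral_le_of_norm_le_const hb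
      _ = M' / ‖ω‖ * t := by rw [sub_zero, _root_.abs_of_nonneg ht]
      _ ≤ M' / ‖ω‖ * t₀ := by
          apply mul_le_mul_of_nonneg_left ht0 (by positivity)
      _ = t₀ * M' / ‖ω‖ := by ring
  calc ‖Complex.exp (-ω * t) * (g t * (Complex.exp (ω * t) / ω))
        - Complex.exp (-ω * t) * (g 0 * (Complex.exp (ω * ((0:ℝ):ℂ)) / ω))
        - ∫ τ in (0:ℝ)..t, Complex.exp (-ω * t) * (deriv g τ * (Complex.exp (ω * τ) / ω))‖
      ≤ ‖Complex.exp (-ω * t) * (g t * (Complex.exp (ω * t) / ω))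
        - Complex.exp (-ω * t) * (g 0 * (Complex.exp (ω * ((0:ℝ):ℂ)) / ω))‖
        + ‖∫ τ in (0:ℝ)..t, Complex.exp (-ω * t) * (deriv g τ * (Complex.exp (ω * τ) / ω))‖ :=
        norm_sub_le _ _
    _ ≤ (‖Complex.exp (-ω * t) * (g t * (Complex.exp (ω * t) / ω))‖
        + ‖Complex.exp (-ω * t) * (g 0 * (Complex.exp (ω * ((0:ℝ):ℂ)) / ω))‖)
        + ‖∫ τ in (0:ℝ)..t, Complex.exp (-ω * t) * (deriv g τ * (Complex.exp (ω * τ) / ω))‖ := by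
        gcongr
        exact norm_sub_le _ _
    _ ≤ (M / ‖ω‖ + M / ‖ω‖) + t₀ * M' / ‖ω‖ := by gcongr
    _ = (2 * M + t₀ * M') / ‖ω‖ := by ring
    _ ≤ (2 * M + t₀ * M' + 1) / ‖ω‖ := by
        apply div_le_div_of_nonneg_right (by linarith) hωpos.le
    _ = (2 * M + t₀ * M' + 1) / ‖l‖ ^ 4 := by rw [hωnorm]
end
end

section
/- Let g₀ ∈ C^∞([0,∞)), T > 0 and 0 < t < T. Then (2−2i) ∫_{Γ₁} e^{−λ⁴ t} λ³ g̃₀(λ⁴, T) dλ + (−2−2i) ∫_{Γ₂} e^{−λ⁴ t} λ³ g̃₀(λ⁴, T) dλ = 2π g₀(t), where both contour integrals are understood as improper limits lim_{A→∞} of the integrals over Γ_k ∩ {|λ| ≤ A}. -/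
open MeasureTheory Filter Complex Real Set Topology

noncomputable section

/-- Truncation of the contour integral over `Γ₁` (ray `arg λ = 7π/8` from ∞ to 0, followed by the
ray `arg λ = 5π/8` from 0 to ∞) to `Γ₁ ∩ {|λ| ≤ A}`. -/
def G1trunc (F : ℂ → ℂ) (A : ℝ) : ℂ :=
  ∫ r in (0:ℝ)..A,
    (F ((r:ℂ) * Complex.exp (Complex.I * ((5*π/8 : ℝ):ℂ))) * Complex.exp (Complex.I * ((5*π/8 : ℝ):ℂ))
      - F ((r:ℂ) * Complex.exp (Complex.I * ((7*π/8 : ℝ):ℂ))) * Complex.exp (Complex.I * ((7*π/8 : ℝ):ℂ)))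

/-- Truncation of the contour integral over `Γ₂` (ray `arg λ = 3π/8` from ∞ to 0, followed by the
ray `arg λ = π/8` from 0 to ∞) to `Γ₂ ∩ {|λ| ≤ A}`. -/
def G2trunc (F : ℂ → ℂ) (A : ℝ) : ℂ :=
  ∫ r in (0:ℝ)..A,
    (F ((r:ℂ) * Complex.exp (Complex.I * ((π/8 : ℝ):ℂ))) * Complex.exp (Complex.I * ((π/8 : ℝ):ℂ))
      - F ((r:ℂ) * Complex.exp (Complex.I * ((3*π/8 : ℝ):ℂ))) * Complex.exp (Complex.I * ((3*π/8 : ℝ):ℂ)))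

lemma integral_exp_neg_mul_Ioi' {b : ℝ} (hb : 0 < b) :
    ∫ s in Ioi (0:ℝ), Real.exp (-(b*s)) = 1/b := by
  have hderiv : ∀ x ∈ Ici (0:ℝ), HasDerivAt (fun s => -Real.exp (-(b*s))/b) (Real.exp (-(b*x))) x := by
    intro x _
    have h1 : HasDerivAt (fun s : ℝ => -(b*s)) (-b) x := by
      simpa using (hasDerivAt_neg' x).const_mul b
    have h2 := (h1.exp).neg.div_const b
    refine h2.congr_deriv ?_
    rw [mul_neg, neg_neg, mul_div_assoc, div_self hb.ne', mul_one]
  have h0 : Tendsto (fun s : ℝ => -(b*s)) atTop atBot := by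
    apply tendsto_neg_atBot_iff.2
    exact Tendsto.const_mul_atTop hb tendsto_id
  have h3 : Tendsto (fun s => -Real.exp (-(b*s))/b) atTop (𝓝 0) := by
    have := (Real.tendsto_exp_atBot).comp h0
    simpa using (this.neg.div_const b)
  have hint : IntegrableOn (fun s : ℝ => Real.exp (-(b*s))) (Ioi (0:ℝ)) := by
    simpa [neg_mul] using exp_neg_integrableOn_Ioi (0:ℝ) hb
  have := integral_Ioi_of_hasDerivAt_of_tendsto' hderiv hint h3
  rw [this]; simp; ring

lemma abs_sin_le' {u : ℝ} (hu : 0 < u) : |Real.sin u| ≤ u := by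
  rcases le_or_gt u 1 with h | h
  · rw [_root_.abs_of_nonneg (Real.sin_nonneg_of_nonneg_of_le_pi hu.le
      (by linarith [Real.pi_gt_three]))]
    exact Real.sin_le hu.le
  · calc |Real.sin u| ≤ 1 := Real.abs_sin_le_one u
      _ ≤ u := h.le

lemma integral_sin_exp {s B : ℝ} :
    ∫ u in (0:ℝ)..B, Real.sin u * Real.exp (-(s*u))
      = (1 - Real.exp (-(s*B)) * (Real.cos B + s * Real.sin B))/(1+s^2) := by
  have hs : (1:ℝ) + s^2 ≠ 0 := by positivity
  have hderiv : ∀ u ∈ uIcc (0:ℝ) B,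
      HasDerivAt (fun u => -(Real.exp (-(s*u)) * (Real.cos u + s * Real.sin u))/(1+s^2))
        (Real.sin u * Real.exp (-(s*u))) u := by
    intro u _
    have h1 : HasDerivAt (fun u : ℝ => Real.exp (-(s*u))) (-s * Real.exp (-(s*u))) u := by
      simpa [mul_comm] using (((hasDerivAt_id u).const_mul s).neg).exp
    have h2 : HasDerivAt (fun u : ℝ => Real.cos u + s * Real.sin u)
        (-Real.sin u + s * Real.cos u) u :=
      (Real.hasDerivAt_cos u).add ((Real.hasDerivAt_sin u).const_mul s)
    have h3 := ((h1.mul h2).neg).div_const (1+s^2)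
    refine h3.congr_deriv ?_
    rw [div_eq_iff hs]
    ring
  have hcont : IntervalIntegrable (fun u => Real.sin u * Real.exp (-(s*u))) volume 0 B :=
    (Continuous.intervalIntegrable (by continuity) _ _)
  have := intervalIntegral.integral_eq_sub_of_hasDerivAt hderiv hcont
  rw [this]
  field_simp
  simp only [mul_zero, neg_zero, Real.exp_zero, Real.sin_zero, Real.cos_zero]
  ring

lemma sin_exp_integrable {B : ℝ} (hB : 0 < B) :
    Integrable (fun p : ℝ × ℝ => Real.sin p.1 * Real.exp (-(p.1*p.2)))
      ((volume.restrict (Ioc 0 B)).prod (volume.restrict (Ioi 0))) := by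
  have hcont : Continuous (fun p : ℝ × ℝ => Real.sin p.1 * Real.exp (-(p.1*p.2))) :=
    (Real.continuous_sin.comp continuous_fst).mul
      (Real.continuous_exp.comp (continuous_fst.mul continuous_snd).neg)
  rw [integrable_prod_iff hcont.aestronglyMeasurable]
  constructor
  · filter_upwards [ae_restrict_mem measurableSet_Ioc] with u hu
    have hint : IntegrableOn (fun s : ℝ => Real.exp (-(u*s))) (Ioi (0:ℝ)) := by
      simpa [neg_mul] using exp_neg_integrableOn_Ioi (0:ℝ) hu.1
    exact hint.const_mul _
  · have hmeas : AEStronglyMeasurable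
        (fun u : ℝ => ∫ s, ‖Real.sin u * Real.exp (-(u*s))‖ ∂(volume.restrict (Ioi 0)))
        (volume.restrict (Ioc 0 B)) :=
      (hcont.aestronglyMeasurable.norm.integral_prod_right')
    refine Integrable.mono' (g := fun _ => (1:ℝ))
      (integrableOn_const measure_Ioc_lt_top.ne) hmeas ?_
    filter_upwards [ae_restrict_mem measurableSet_Ioc] with u hu
    have h1 : ∀ s : ℝ, ‖Real.sin u * Real.exp (-(u*s))‖ = |Real.sin u| * Real.exp (-(u*s)) := by
      intro s
      rw [norm_mul, Real.norm_eq_abs, Real.norm_eq_abs, _root_.abs_of_pos (Real.exp_pos _)]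
    simp_rw [h1]
    rw [MeasureTheory.integral_const_mul, integral_exp_neg_mul_Ioi' hu.1, Real.norm_eq_abs]
    rw [_root_.abs_of_nonneg (mul_nonneg (abs_nonneg _) (one_div_nonneg.2 hu.1.le))]
    calc |Real.sin u| * (1/u) ≤ u * (1/u) := by
          apply mul_le_mul_of_nonneg_right (abs_sin_le' hu.1) (one_div_nonneg.2 hu.1.le)
      _ = 1 := by rw [mul_one_div, div_self hu.1.ne']

lemma Si_eq {B : ℝ} (hB : 0 < B) :
    ∫ u in (0:ℝ)..B, Real.sin u / u
      = ∫ s in Ioi (0:ℝ), (1 - Real.exp (-(s*B)) * (Real.cos B + s * Real.sin B))/(1+s^2) := by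
  rw [intervalIntegral.integral_of_le hB.le]
  have step1 : ∫ u in Ioc (0:ℝ) B, Real.sin u / u
      = ∫ u in Ioc (0:ℝ) B, ∫ s in Ioi (0:ℝ), Real.sin u * Real.exp (-(u*s)) := by
    apply setIntegral_congr_fun measurableSet_Ioc
    intro u hu
    dsimp only
    rw [MeasureTheory.integral_const_mul, integral_exp_neg_mul_Ioi' hu.1]
    ring
  rw [step1]
  have hswap := MeasureTheory.integral_integral_swap
    (f := fun u s => Real.sin u * Real.exp (-(u*s)))
    (μ := volume.restrict (Ioc 0 B)) (ν := volume.restrict (Ioi 0))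
    (sin_exp_integrable hB)
  refine hswap.trans ?_
  apply setIntegral_congr_fun measurableSet_Ioi
  intro s _
  dsimp only
  rw [← intervalIntegral.integral_of_le hB.le]
  rw [← integral_sin_exp (s := s) (B := B)]
  congr 1
  funext u
  rw [mul_comm u s]

lemma integrable_inv_one_add_sq_Ioi :
    IntegrableOn (fun s : ℝ => 1/(1+s^2)) (Ioi (0:ℝ)) := by
  have := integrable_inv_one_add_sq
  simpa [one_div] using this.integrableOn (s := Ioi (0:ℝ))

lemma integral_Ioi_inv_one_add_sq' : ∫ s in Ioi (0:ℝ), 1/(1+s^2) = π/2 := by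
  have hderiv : ∀ x ∈ Ici (0:ℝ), HasDerivAt Real.arctan (1/(1+x^2)) x :=
    fun x _ => Real.hasDerivAt_arctan x
  have htend : Tendsto Real.arctan atTop (𝓝 (π/2)) :=
    Real.tendsto_arctan_atTop.mono_right nhdsWithin_le_nhds
  have := integral_Ioi_of_hasDerivAt_of_tendsto' hderiv integrable_inv_one_add_sq_Ioi htend
  rw [this, Real.arctan_zero, sub_zero]

lemma err_bound {B s : ℝ} (hs : 0 < s) :
    ‖Real.exp (-(s*B)) * (Real.cos B + s * Real.sin B)/(1+s^2)‖ ≤ 2 * Real.exp (-(B*s)) := by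
  have h2 : (0:ℝ) < 1 + s^2 := by positivity
  rw [Real.norm_eq_abs, abs_div, _root_.abs_of_pos h2, abs_mul,
    _root_.abs_of_pos (Real.exp_pos _), div_le_iff₀ h2, mul_comm s B]
  have hcs : |Real.cos B + s * Real.sin B| ≤ 1 + s := by
    calc |Real.cos B + s * Real.sin B| ≤ |Real.cos B| + |s * Real.sin B| := abs_add_le _ _
      _ ≤ 1 + s * 1 := by
          refine add_le_add (Real.abs_cos_le_one B) ?_
          rw [abs_mul, _root_.abs_of_pos hs]
          exact mul_le_mul_of_nonneg_left (Real.abs_sin_le_one B) hs.le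
      _ = 1 + s := by ring
  have hq : 1 + s ≤ 2 * (1 + s^2) := by nlinarith [sq_nonneg (2*s - 1)]
  calc Real.exp (-(B*s)) * |Real.cos B + s * Real.sin B| ≤ Real.exp (-(B*s)) * (1+s) :=
        mul_le_mul_of_nonneg_left hcs (Real.exp_pos _).le
    _ ≤ Real.exp (-(B*s)) * (2 * (1+s^2)) :=
        mul_le_mul_of_nonneg_left hq (Real.exp_pos _).le
    _ = 2 * Real.exp (-(B*s)) * (1+s^2) := by ring

lemma err_cont {B : ℝ} : Continuous
    (fun s : ℝ => Real.exp (-(s*B)) * (Real.cos B + s * Real.sin B)/(1+s^2)) := by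
  apply Continuous.div
  · exact (Real.continuous_exp.comp (continuous_id.mul continuous_const).neg).mul
      (continuous_const.add (continuous_id.mul continuous_const))
  · exact continuous_const.add (continuous_pow 2)
  · intro x; positivity

lemma err_integrable {B : ℝ} (hB : 0 < B) :
    IntegrableOn (fun s : ℝ => Real.exp (-(s*B)) * (Real.cos B + s * Real.sin B)/(1+s^2))
      (Ioi (0:ℝ)) := by
  have hexp : IntegrableOn (fun s : ℝ => Real.exp (-(B*s))) (Ioi (0:ℝ)) := by
    simpa [neg_mul] using exp_neg_integrableOn_Ioi (0:ℝ) hB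
  refine Integrable.mono' (hexp.const_mul 2) err_cont.aestronglyMeasurable ?_
  filter_upwards [ae_restrict_mem measurableSet_Ioi] with s hs
  exact err_bound hs

lemma Si_sub_le {B : ℝ} (hB : 0 < B) :
    |(∫ u in (0:ℝ)..B, Real.sin u / u) - π/2| ≤ 2/B := by
  have hexp : IntegrableOn (fun s : ℝ => Real.exp (-(B*s))) (Ioi (0:ℝ)) := by
    simpa [neg_mul] using exp_neg_integrableOn_Ioi (0:ℝ) hB
  rw [Si_eq hB, ← integral_Ioi_inv_one_add_sq']
  have hsplit : ∀ s : ℝ,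
      (1 - Real.exp (-(s*B)) * (Real.cos B + s * Real.sin B))/(1+s^2)
        = 1/(1+s^2) - Real.exp (-(s*B)) * (Real.cos B + s * Real.sin B)/(1+s^2) := by
    intro s; ring
  simp_rw [hsplit]
  rw [integral_sub integrable_inv_one_add_sq_Ioi (err_integrable hB), sub_sub_cancel_left,
    abs_neg]
  have h1 : ‖∫ s in Ioi (0:ℝ), Real.exp (-(s*B)) * (Real.cos B + s*Real.sin B)/(1+s^2)‖
      ≤ ∫ s in Ioi (0:ℝ), 2 * Real.exp (-(B*s)) := by
    apply norm_integral_le_of_norm_le (hexp.const_mul 2)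
    filter_upwards [ae_restrict_mem measurableSet_Ioi] with s hs
    exact err_bound hs
  rw [Real.norm_eq_abs] at h1
  calc |∫ s in Ioi (0:ℝ), Real.exp (-(s*B)) * (Real.cos B + s*Real.sin B)/(1+s^2)| ≤
      ∫ s in Ioi (0:ℝ), 2 * Real.exp (-(B*s)) := h1
    _ = 2/B := by
        rw [MeasureTheory.integral_const_mul, integral_exp_neg_mul_Ioi' hB]
        ring

lemma Si_tendsto : Tendsto (fun B => ∫ u in (0:ℝ)..B, Real.sin u / u) atTop (𝓝 (π/2)) := by
  rw [tendsto_iff_dist_tendsto_zero]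
  have habs : Tendsto (fun B : ℝ => 2/B) atTop (𝓝 0) :=
    tendsto_const_nhds.div_atTop tendsto_id
  apply squeeze_zero' (Eventually.of_forall fun B => dist_nonneg) ?_ habs
  filter_upwards [eventually_gt_atTop (0:ℝ)] with B hB
  rw [Real.dist_eq]
  exact Si_sub_le hB

lemma intervalIntegrable_of_bdd {E : Type*} [NormedAddCommGroup E] {f : ℝ → E} {C : ℝ}
    (hm : AEStronglyMeasurable f volume) (hb : ∀ x, ‖f x‖ ≤ C) (a b : ℝ) :
    IntervalIntegrable f volume a b := by
  rw [intervalIntegrable_iff]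
  refine Integrable.mono' (integrableOn_const measure_Ioc_lt_top.ne) hm.restrict
    (Eventually.of_forall hb)

lemma abs_sin_div_le_one (x : ℝ) : ‖Real.sin x / x‖ ≤ 1 := by
  rcases lt_trichotomy x 0 with h | h | h
  · rw [Real.norm_eq_abs, abs_div]
    rw [div_le_one (abs_pos.mpr h.ne)]
    rw [_root_.abs_of_neg h]
    calc |Real.sin x| = |Real.sin (-x)| := by rw [Real.sin_neg, abs_neg]
      _ ≤ -x := abs_sin_le' (by linarith)
  · simp [h]
  · rw [Real.norm_eq_abs, abs_div, _root_.abs_of_pos h, div_le_one h]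
    exact abs_sin_le' h

lemma sinc_ii (a b : ℝ) : IntervalIntegrable (fun x => Real.sin x / x) volume a b :=
  intervalIntegrable_of_bdd ((Real.measurable_sin.div measurable_id).aestronglyMeasurable)
    abs_sin_div_le_one a b

lemma kernel_eq {B t T : ℝ} (hB : 0 < B) (ht : 0 < t) (htT : t < T) :
    ∫ τ in (0:ℝ)..T, Real.sin (B*(τ-t))/(τ-t)
      = (∫ u in (0:ℝ)..(B*t), Real.sin u / u) + ∫ u in (0:ℝ)..(B*(T-t)), Real.sin u / u := by
  have key : ∀ u : ℝ, Real.sin (B*u)/u = B • (Real.sin (B*u) / (B*u)) := by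
    intro u
    rcases eq_or_ne u 0 with rfl | hu
    · simp
    · rw [smul_eq_mul]
      field_simp
  calc ∫ τ in (0:ℝ)..T, Real.sin (B*(τ-t))/(τ-t)
      = ∫ u in (0-t)..(T-t), Real.sin (B*u)/u :=
        intervalIntegral.integral_comp_sub_right (fun u => Real.sin (B*u)/u) t
    _ = ∫ u in (-t)..(T-t), B • ((fun x => Real.sin x / x) (B*u)) := by
        rw [zero_sub]
        exact intervalIntegral.integral_congr (fun u _ => key u)
    _ = B • ∫ u in (-t)..(T-t), (fun x => Real.sin x / x) (B*u) := by
        rw [intervalIntegral.integral_smul]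
    _ = ∫ x in (B*(-t))..(B*(T-t)), Real.sin x / x :=
        intervalIntegral.smul_integral_comp_mul_left (fun x => Real.sin x / x) B
    _ = (∫ x in (B*(-t))..(0:ℝ), Real.sin x / x) + ∫ x in (0:ℝ)..(B*(T-t)), Real.sin x / x :=
        (intervalIntegral.integral_add_adjacent_intervals (sinc_ii _ _) (sinc_ii _ _)).symm
    _ = (∫ u in (0:ℝ)..(B*t), Real.sin u / u) + ∫ u in (0:ℝ)..(B*(T-t)), Real.sin u / u := by
        congr 1
        have h1 : ∀ x : ℝ, Real.sin x / x = (fun y => Real.sin y / y) (-x) := by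
          intro x; simp [Real.sin_neg, neg_div_neg_eq]
        calc ∫ x in (B*(-t))..(0:ℝ), Real.sin x / x
            = ∫ x in (B*(-t))..(0:ℝ), (fun y => Real.sin y / y) (-x) :=
              intervalIntegral.integral_congr (fun x _ => h1 x)
          _ = ∫ x in (-0:ℝ)..(-(B*(-t))), Real.sin x / x :=
              intervalIntegral.integral_comp_neg (fun y => Real.sin y / y)
          _ = ∫ u in (0:ℝ)..(B*t), Real.sin u / u := by norm_num

lemma tendsto_cocompact_comp {φ : ℝ → ℝ} (hφ : Tendsto φ atTop (cocompact ℝ)) :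
    Tendsto (fun B => -(φ B/(2*π))) atTop (cocompact ℝ) := by
  have hg : Tendsto (fun x : ℝ => -(x/(2*π))) (cocompact ℝ) (cocompact ℝ) := by
    rw [cocompact_eq_atBot_atTop, tendsto_sup]
    constructor
    · refine Tendsto.mono_right ?_ le_sup_right
      exact tendsto_neg_atTop_iff.2 (tendsto_id.atBot_div_const (by positivity))
    · refine Tendsto.mono_right ?_ le_sup_left
      exact tendsto_neg_atBot_iff.2 (tendsto_id.atTop_div_const (by positivity))
  exact hg.comp hφ

lemma RL_aux {a b : ℝ} (hab : a ≤ b) {h : ℝ → ℂ} (hint : IntegrableOn h (Ioc a b))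
    {φ : ℝ → ℝ} (hφ : Tendsto φ atTop (cocompact ℝ)) :
    Tendsto (fun B => ∫ τ in a..b, Complex.exp (↑(φ B * τ) * Complex.I) * h τ) atTop (𝓝 0) := by
  set f := (Ioc a b).indicator h with hf_def
  have hf : Integrable f := hint.integrable_indicator measurableSet_Ioc
  have key : ∀ w : ℝ, ∫ τ in a..b, Complex.exp (↑(w * τ) * Complex.I) * h τ
      = FourierTransform.fourier f (-(w/(2*π))) := by
    intro w
    rw [Real.fourier_real_eq_integral_exp_smul]
    rw [intervalIntegral.integral_of_le hab]
    have hptw : ∀ v : ℝ, Complex.exp (↑(-2*π*v*(-(w/(2*π))))*Complex.I) • f v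
        = (Ioc a b).indicator (fun τ => Complex.exp (↑(w*τ)*Complex.I) * h τ) v := by
      intro v
      have harg : -2*π*v*(-(w/(2*π))) = w*v := by
        field_simp
      rw [harg, smul_eq_mul, hf_def]
      by_cases hv : v ∈ Ioc a b
      · rw [Set.indicator_of_mem hv, Set.indicator_of_mem hv, mul_comm w v]
      · rw [Set.indicator_of_notMem hv, Set.indicator_of_notMem hv, mul_zero]
    rw [show (∫ v : ℝ, Complex.exp (↑(-2*π*v*(-(w/(2*π))))*Complex.I) • f v)
        = ∫ v : ℝ, (Ioc a b).indicator (fun τ => Complex.exp (↑(w*τ)*Complex.I) * h τ) v from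
      MeasureTheory.integral_congr_ae (Eventually.of_forall hptw)]
    rw [MeasureTheory.integral_indicator measurableSet_Ioc]
  have hcomp := (Real.zero_at_infty_fourier f).comp (tendsto_cocompact_comp hφ)
  refine hcomp.congr (fun B => ?_)
  exact (key (φ B)).symm

lemma RL_shift {T t : ℝ} (hT : 0 ≤ T) {h : ℝ → ℂ} (hint : IntegrableOn h (Ioc 0 T))
    {φ : ℝ → ℝ} (hφ : Tendsto φ atTop (cocompact ℝ)) :
    Tendsto (fun B => ∫ τ in (0:ℝ)..T, Complex.exp (↑(φ B * (τ - t)) * Complex.I) * h τ)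
      atTop (𝓝 0) := by
  have base := RL_aux hT hint hφ
  rw [tendsto_zero_iff_norm_tendsto_zero] at base ⊢
  refine base.congr (fun B => ?_)
  have key : ∫ τ in (0:ℝ)..T, Complex.exp (↑(φ B * (τ - t)) * Complex.I) * h τ
      = Complex.exp (↑(-(φ B * t)) * Complex.I)
        * ∫ τ in (0:ℝ)..T, Complex.exp (↑(φ B * τ) * Complex.I) * h τ := by
    rw [← intervalIntegral.integral_const_mul]
    apply intervalIntegral.integral_congr
    intro τ _
    dsimp only
    rw [← mul_assoc, ← Complex.exp_add]
    congr 2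
    push_cast
    ring
  rw [key, norm_mul]
  have : ‖Complex.exp (↑(-(φ B * t)) * Complex.I)‖ = 1 := Complex.norm_exp_ofReal_mul_I _
  rw [this, one_mul]

lemma exp_mul_h_ii {T t w : ℝ} (hT : 0 ≤ T) {h : ℝ → ℂ}
    (hmeas : AEStronglyMeasurable h volume) (hint : IntegrableOn h (Ioc 0 T)) :
    IntervalIntegrable (fun τ => Complex.exp (↑(w * (τ - t)) * Complex.I) * h τ) volume 0 T := by
  rw [intervalIntegrable_iff_integrableOn_Ioc_of_le hT]
  refine Integrable.bdd_mul (c := 1) hint ?_ (Eventually.of_forall fun τ => le_of_eq (Complex.norm_exp_ofReal_mul_I _))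
  exact (Continuous.aestronglyMeasurable (by continuity)).restrict

lemma RL_sin {T t : ℝ} (hT : 0 ≤ T) {h : ℝ → ℂ}
    (hmeas : AEStronglyMeasurable h volume) (hint : IntegrableOn h (Ioc 0 T)) :
    Tendsto (fun B : ℝ => ∫ τ in (0:ℝ)..T, (Real.sin (B*(τ-t)) : ℂ) * h τ) atTop (𝓝 0) := by
  have hid : Tendsto (fun B : ℝ => B) atTop (cocompact ℝ) := by
    rw [cocompact_eq_atBot_atTop]
    exact tendsto_id.mono_right le_sup_right
  have hneg : Tendsto (fun B : ℝ => -B) atTop (cocompact ℝ) := by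
    rw [cocompact_eq_atBot_atTop]
    exact tendsto_neg_atBot_iff.2 tendsto_id |>.mono_right le_sup_left
  have h1 := (RL_shift (t := t) hT hint hneg).const_mul (Complex.I/2)
  have h2 := (RL_shift (t := t) hT hint hid).const_mul (Complex.I/2)
  have hsum := h1.sub h2
  rw [mul_zero, sub_zero] at hsum
  refine hsum.congr (fun B => ?_)
  rw [← intervalIntegral.integral_const_mul, ← intervalIntegral.integral_const_mul,
    ← intervalIntegral.integral_sub ((exp_mul_h_ii hT hmeas hint).const_mul _)
      ((exp_mul_h_ii hT hmeas hint).const_mul _)]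
  apply intervalIntegral.integral_congr
  intro τ _
  dsimp only
  rw [Complex.ofReal_sin, Complex.sin]
  push_cast
  ring

lemma kernel_tendsto (g₀ : ℝ → ℂ) (hg₀ : ContDiff ℝ (⊤ : ℕ∞) g₀) {t T : ℝ} (ht : 0 < t) (htT : t < T) :
    Tendsto (fun B : ℝ => ∫ τ in (0:ℝ)..T, ((2 * (Real.sin (B*(τ-t))/(τ-t)) : ℝ) : ℂ) * g₀ τ)
      atTop (𝓝 (2 * (π:ℂ) * g₀ t)) := by
  have hT : (0:ℝ) ≤ T := by linarith
  set h : ℝ → ℂ := fun τ => (g₀ τ - g₀ t) / ((τ - t : ℝ) : ℂ) with hh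
  have hmeas : AEStronglyMeasurable h volume := by
    apply Measurable.aestronglyMeasurable
    exact ((hg₀.continuous.measurable.sub measurable_const).div
      (Complex.measurable_ofReal.comp (measurable_id.sub measurable_const)))
  -- Lipschitz bound
  obtain ⟨C, hC⟩ := (isCompact_Icc (a := (0:ℝ)) (b := T)).exists_bound_of_continuousOn
    ((hg₀.continuous_deriv (by simp)).continuousOn)
  have hC0 : 0 ≤ C := le_trans (norm_nonneg _) (hC t ⟨ht.le, htT.le⟩)
  have hlip : ∀ x ∈ Icc (0:ℝ) T, ∀ y ∈ Icc (0:ℝ) T, ‖g₀ x - g₀ y‖ ≤ C * ‖x - y‖ := by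
    intro x hx y hy
    exact (convex_Icc (0:ℝ) T).norm_image_sub_le_of_norm_deriv_le
      (fun z _ => (hg₀.differentiable (by simp)) z)
      hC hy hx
  have hbound : ∀ τ ∈ Ioc (0:ℝ) T, ‖h τ‖ ≤ C := by
    intro τ hτ
    rcases eq_or_ne τ t with rfl | hne
    · simp [hh, hC0]
    · rw [hh]
      dsimp only
      rw [norm_div, Complex.norm_real, Real.norm_eq_abs]
      rw [div_le_iff₀ (abs_pos.2 (sub_ne_zero.2 hne))]
      have := hlip τ ⟨hτ.1.le, hτ.2⟩ t ⟨ht.le, htT.le⟩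
      simpa [Real.norm_eq_abs] using this
  have hint : IntegrableOn h (Ioc 0 T) := by
    refine Integrable.mono' (g := fun _ => C)
      (integrableOn_const measure_Ioc_lt_top.ne) hmeas.restrict ?_
    filter_upwards [ae_restrict_mem measurableSet_Ioc] with τ hτ using hbound τ hτ
  -- splitting
  have hsplit : ∀ B : ℝ, ∀ τ : ℝ,
      ((2 * (Real.sin (B*(τ-t))/(τ-t)) : ℝ) : ℂ) * g₀ τ
        = ((2 * (Real.sin (B*(τ-t))/(τ-t)) : ℝ) : ℂ) * g₀ t
          + (2:ℂ) * ((Real.sin (B*(τ-t)) : ℂ) * h τ) := by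
    intro B τ
    rcases eq_or_ne τ t with rfl | hne
    · simp [hh]
    · rw [hh]
      dsimp only
      have hz : ((τ:ℂ) - (t:ℂ)) ≠ 0 := by
        exact_mod_cast sub_ne_zero.2 hne
      push_cast
      field_simp
      ring
  have hii1 : ∀ B : ℝ, IntervalIntegrable
      (fun τ => ((2 * (Real.sin (B*(τ-t))/(τ-t)) : ℝ) : ℂ) * g₀ t) volume 0 T := by
    intro B
    refine intervalIntegrable_of_bdd (C := 2 * |B| * ‖g₀ t‖) ?_ ?_ 0 T
    · apply Measurable.aestronglyMeasurable
      apply Measurable.mul _ measurable_const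
      apply Complex.measurable_ofReal.comp
      exact (measurable_const.mul ((Real.measurable_sin.comp
        (measurable_const.mul (measurable_id.sub measurable_const))).div
          (measurable_id.sub measurable_const)))
    · intro τ
      rw [norm_mul, Complex.norm_real]
      have h1 : ‖2 * (Real.sin (B*(τ-t))/(τ-t))‖ ≤ 2 * |B| := by
        rw [norm_mul, Real.norm_eq_abs, Real.norm_eq_abs, _root_.abs_two]
        refine mul_le_mul_of_nonneg_left ?_ (by norm_num)
        rcases eq_or_ne τ t with rfl | hne
        · simp
        · rw [abs_div, div_le_iff₀ (abs_pos.2 (sub_ne_zero.2 hne))]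
          calc |Real.sin (B*(τ-t))| ≤ |B*(τ-t)| := by
                have := abs_sin_div_le_one (B*(τ-t))
                rcases eq_or_ne (B*(τ-t)) 0 with h0 | h0
                · simp [h0]
                · rw [Real.norm_eq_abs, abs_div, div_le_one (abs_pos.2 h0)] at this
                  exact this
            _ = |B| * |τ - t| := abs_mul _ _
      exact mul_le_mul_of_nonneg_right h1 (norm_nonneg _)
  have hii2 : ∀ B : ℝ, IntervalIntegrable
      (fun τ => (2:ℂ) * ((Real.sin (B*(τ-t)) : ℂ) * h τ)) volume 0 T := by
    intro B
    rw [intervalIntegrable_iff_integrableOn_Ioc_of_le hT]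
    simp_rw [← mul_assoc]
    refine Integrable.bdd_mul (c := 2) hint ?_ (Eventually.of_forall fun τ => ?_)
    · exact (Measurable.aestronglyMeasurable (by
        exact measurable_const.mul (Complex.measurable_ofReal.comp
          (Real.measurable_sin.comp (measurable_const.mul (measurable_id.sub measurable_const)))))).restrict
    · rw [norm_mul, Complex.norm_real, Real.norm_eq_abs]
      calc ‖(2:ℂ)‖ * |Real.sin (B*(τ-t))| ≤ 2 * 1 := by
            refine mul_le_mul (by norm_num) (Real.abs_sin_le_one _) (abs_nonneg _) (by norm_num)
        _ = 2 := by norm_num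
  -- rewrite integral as sum
  have hrw : ∀ B : ℝ,
      (∫ τ in (0:ℝ)..T, ((2 * (Real.sin (B*(τ-t))/(τ-t)) : ℝ) : ℂ) * g₀ τ)
        = ((∫ τ in (0:ℝ)..T, 2 * (Real.sin (B*(τ-t))/(τ-t)) : ℝ) : ℂ) * g₀ t
          + (2:ℂ) * ∫ τ in (0:ℝ)..T, (Real.sin (B*(τ-t)) : ℂ) * h τ := by
    intro B
    rw [show (∫ τ in (0:ℝ)..T, ((2 * (Real.sin (B*(τ-t))/(τ-t)) : ℝ) : ℂ) * g₀ τ)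
        = ∫ τ in (0:ℝ)..T, (((2 * (Real.sin (B*(τ-t))/(τ-t)) : ℝ) : ℂ) * g₀ t
          + (2:ℂ) * ((Real.sin (B*(τ-t)) : ℂ) * h τ)) from
      intervalIntegral.integral_congr (fun τ _ => hsplit B τ)]
    rw [intervalIntegral.integral_add (hii1 B) (hii2 B)]
    congr 1
    · rw [intervalIntegral.integral_mul_const, intervalIntegral.integral_ofReal]
    · rw [intervalIntegral.integral_const_mul]
  -- limits
  have hlim1 : Tendsto (fun B : ℝ => ∫ τ in (0:ℝ)..T, 2 * (Real.sin (B*(τ-t))/(τ-t)))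
      atTop (𝓝 (2*π)) := by
    have hSi1 : Tendsto (fun B : ℝ => ∫ u in (0:ℝ)..(B*t), Real.sin u / u) atTop (𝓝 (π/2)) :=
      Si_tendsto.comp (tendsto_id.atTop_mul_const ht)
    have hSi2 : Tendsto (fun B : ℝ => ∫ u in (0:ℝ)..(B*(T-t)), Real.sin u / u)
        atTop (𝓝 (π/2)) :=
      Si_tendsto.comp (tendsto_id.atTop_mul_const (by linarith))
    have hsum := (hSi1.add hSi2).const_mul (2:ℝ)
    have : (2:ℝ) * (π/2 + π/2) = 2*π := by ring
    rw [this] at hsum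
    refine hsum.congr' ?_
    filter_upwards [eventually_gt_atTop (0:ℝ)] with B hB
    rw [← kernel_eq hB ht htT, intervalIntegral.integral_const_mul]
  have hlim1' : Tendsto (fun B : ℝ =>
      ((∫ τ in (0:ℝ)..T, 2 * (Real.sin (B*(τ-t))/(τ-t)) : ℝ) : ℂ) * g₀ t)
      atTop (𝓝 ((2*(π:ℂ)) * g₀ t)) := by
    have hcast := (Complex.continuous_ofReal.tendsto _).comp hlim1
    have := hcast.mul_const (g₀ t)
    simpa using this
  have hlim2 := (RL_sin (T := T) (t := t) hT hmeas hint).const_mul (2:ℂ)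
  rw [mul_zero] at hlim2
  have := hlim1'.add hlim2
  rw [add_zero] at this
  refine this.congr (fun B => (hrw B).symm)

lemma inner_exp_integral {B c : ℝ} (hc : c ≠ 0) :
    (∫ s in (0:ℝ)..B, (Complex.exp ((Complex.I*(c:ℂ))*(s:ℂ)) + Complex.exp (-(Complex.I*(c:ℂ))*(s:ℂ))))
      = ((2 * (Real.sin (B*c)/c) : ℝ) : ℂ) := by
  have hc' : (c:ℂ) ≠ 0 := Complex.ofReal_ne_zero.2 hc
  have h1 : Complex.I * (c:ℂ) ≠ 0 := mul_ne_zero Complex.I_ne_zero hc'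
  have h2 : -(Complex.I * (c:ℂ)) ≠ 0 := neg_ne_zero.2 h1
  rw [intervalIntegral.integral_add
    (Continuous.intervalIntegrable (by continuity) _ _)
    (Continuous.intervalIntegrable (by continuity) _ _)]
  rw [integral_exp_mul_complex h1, integral_exp_mul_complex h2]
  have e1 : Complex.I * (c:ℂ) * (B:ℂ) = ((c*B : ℝ):ℂ) * Complex.I := by push_cast; ring
  have e2 : -(Complex.I * (c:ℂ)) * (B:ℂ) = ((-(c*B) : ℝ):ℂ) * Complex.I := by push_cast; ring
  rw [e1, e2, Complex.exp_mul_I, Complex.exp_mul_I]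
  rw [← Complex.ofReal_cos, ← Complex.ofReal_sin, ← Complex.ofReal_cos, ← Complex.ofReal_sin]
  rw [Real.cos_neg, Real.sin_neg, mul_comm B c]
  push_cast
  field_simp
  ring

def Kf (g₀ : ℝ → ℂ) (t T : ℝ) (s : ℝ) : ℂ :=
  ∫ τ in (0:ℝ)..T,
    (Complex.exp ((Complex.I*(s:ℂ))*((τ:ℂ)-(t:ℂ))) + Complex.exp (-(Complex.I*(s:ℂ))*((τ:ℂ)-(t:ℂ)))) * g₀ τ

lemma ttr_shift (g₀ : ℝ → ℂ) (hg₀ : Continuous g₀) (t T : ℝ) (w : ℂ) :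
    Complex.exp (-w*(t:ℂ)) * ttr g₀ w T = ∫ τ in (0:ℝ)..T, Complex.exp (w*((τ:ℂ)-(t:ℂ))) * g₀ τ := by
  rw [ttr, ← intervalIntegral.integral_const_mul]
  apply intervalIntegral.integral_congr
  intro τ _
  dsimp only
  rw [← mul_assoc, ← Complex.exp_add]
  congr 2
  ring

lemma Kf_cont (g₀ : ℝ → ℂ) (hg₀ : Continuous g₀) (t T : ℝ) : Continuous (Kf g₀ t T) := by
  apply intervalIntegral.continuous_parametric_intervalIntegral_of_continuous' (μ := volume)
  apply Continuous.mul
  · apply Continuous.add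
    · apply Complex.continuous_exp.comp
      apply Continuous.mul
      · exact continuous_const.mul (Complex.continuous_ofReal.comp continuous_fst)
      · exact ((Complex.continuous_ofReal.comp continuous_snd).sub continuous_const)
    · apply Complex.continuous_exp.comp
      apply Continuous.mul
      · exact (continuous_const.mul (Complex.continuous_ofReal.comp continuous_fst)).neg
      · exact ((Complex.continuous_ofReal.comp continuous_snd).sub continuous_const)
  · exact hg₀.comp continuous_snd

lemma Kf_integral_eq (g₀ : ℝ → ℂ) (hg₀ : Continuous g₀) {t T B : ℝ}
    (ht : 0 < t) (htT : t < T) (hB : 0 < B) :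
    ∫ s in (0:ℝ)..B, Kf g₀ t T s
      = ∫ τ in (0:ℝ)..T, ((2 * (Real.sin (B*(τ-t))/(τ-t)) : ℝ) : ℂ) * g₀ τ := by
  have hT : (0:ℝ) ≤ T := by linarith
  obtain ⟨M, hM⟩ := (isCompact_Icc (a := (0:ℝ)) (b := T)).exists_bound_of_continuousOn
    hg₀.continuousOn
  set Φ : ℝ → ℝ → ℂ := fun s τ =>
    (Complex.exp ((Complex.I*(s:ℂ))*((τ:ℂ)-(t:ℂ))) + Complex.exp (-(Complex.I*(s:ℂ))*((τ:ℂ)-(t:ℂ)))) * g₀ τ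
    with hΦ
  have hΦc : Continuous fun p : ℝ × ℝ => Φ p.1 p.2 := by
    apply Continuous.mul
    · apply Continuous.add
      · exact Complex.continuous_exp.comp ((continuous_const.mul
          (Complex.continuous_ofReal.comp continuous_fst)).mul
          ((Complex.continuous_ofReal.comp continuous_snd).sub continuous_const))
      · exact Complex.continuous_exp.comp (((continuous_const.mul
          (Complex.continuous_ofReal.comp continuous_fst)).neg).mul
          ((Complex.continuous_ofReal.comp continuous_snd).sub continuous_const))
    · exact hg₀.comp continuous_snd
  -- integrability on the product
  have hprod : Integrable (fun p : ℝ × ℝ => Φ p.1 p.2)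
      ((volume.restrict (Ioc 0 B)).prod (volume.restrict (Ioc 0 T))) := by
    refine Integrable.mono' (g := fun _ => 2*M + 1) ?_ hΦc.aestronglyMeasurable ?_
    · rw [Measure.prod_restrict]
      refine integrableOn_const ?_
      rw [Measure.prod_prod]
      exact (ENNReal.mul_lt_top measure_Ioc_lt_top measure_Ioc_lt_top).ne
    · rw [Measure.prod_restrict]
      filter_upwards [ae_restrict_mem (measurableSet_Ioc.prod measurableSet_Ioc)] with p hp
      have hexp : ∀ z : ℂ, z.re = 0 → ‖Complex.exp z‖ ≤ 1 := by
        intro z hz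
        rw [Complex.norm_exp, hz, Real.exp_zero]
      have h1 : ‖Complex.exp ((Complex.I*(p.1:ℂ))*((p.2:ℂ)-(t:ℂ)))‖ ≤ 1 := by
        apply hexp; simp [Complex.ext_iff]
      have h2 : ‖Complex.exp (-(Complex.I*(p.1:ℂ))*((p.2:ℂ)-(t:ℂ)))‖ ≤ 1 := by
        apply hexp; simp [Complex.ext_iff]
      have hg : ‖g₀ p.2‖ ≤ M := hM p.2 ⟨hp.2.1.le, hp.2.2⟩
      have hM0 : 0 ≤ M := le_trans (norm_nonneg _) hg
      calc ‖Φ p.1 p.2‖ ≤ (1+1) * M := by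
            rw [hΦ]
            dsimp only
            rw [norm_mul]
            exact mul_le_mul (le_trans (norm_add_le _ _) (add_le_add h1 h2)) hg
              (norm_nonneg _) (by norm_num)
        _ ≤ 2*M + 1 := by linarith
  -- swap
  rw [intervalIntegral.integral_of_le hB.le, intervalIntegral.integral_of_le hT]
  have hswap := MeasureTheory.integral_integral_swap
    (f := Φ) (μ := volume.restrict (Ioc 0 B)) (ν := volume.restrict (Ioc 0 T)) hprod
  have hKf : ∀ s : ℝ, Kf g₀ t T s = ∫ τ in Ioc (0:ℝ) T, Φ s τ := by
    intro s
    rw [Kf, intervalIntegral.integral_of_le hT]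
  calc ∫ s in Ioc (0:ℝ) B, Kf g₀ t T s = ∫ s in Ioc (0:ℝ) B, ∫ τ in Ioc (0:ℝ) T, Φ s τ :=
        setIntegral_congr_fun measurableSet_Ioc (fun s _ => hKf s)
    _ = ∫ τ in Ioc (0:ℝ) T, ∫ s in Ioc (0:ℝ) B, Φ s τ := hswap
    _ = ∫ τ in Ioc (0:ℝ) T, ((2 * (Real.sin (B*(τ-t))/(τ-t)) : ℝ) : ℂ) * g₀ τ := by
        apply integral_congr_ae
        have hne : ∀ᵐ τ ∂(volume.restrict (Ioc 0 T)), τ ≠ t :=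
          ae_restrict_of_ae (compl_mem_ae_iff.2 (measure_singleton t))
        filter_upwards [hne] with τ hτ
        have hc : τ - t ≠ 0 := sub_ne_zero.2 hτ
        rw [← intervalIntegral.integral_of_le hB.le]
        have hsplit : (∫ s in (0:ℝ)..B, Φ s τ)
            = (∫ s in (0:ℝ)..B, (Complex.exp ((Complex.I*((τ-t:ℝ):ℂ))*(s:ℂ))
                + Complex.exp (-(Complex.I*((τ-t:ℝ):ℂ))*(s:ℂ)))) * g₀ τ := by
          rw [← intervalIntegral.integral_mul_const]
          apply intervalIntegral.integral_congr
          intro s _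
          rw [hΦ]
          dsimp only
          congr 3 <;> push_cast <;> ring
        rw [hsplit, inner_exp_integral hc]

lemma exp_pow_aux (θ ψ : ℝ) (h : 4*θ = ψ + 2*π) :
    (Complex.exp (Complex.I * (θ:ℂ)))^4 = Complex.exp ((ψ:ℝ) * Complex.I) := by
  rw [← Complex.exp_nat_mul]
  have hψ : ψ = 4*θ - 2*π := by linarith
  have harg : (4:ℕ) * (Complex.I * (θ:ℂ)) = (ψ:ℂ) * Complex.I + 2*(π:ℂ)*Complex.I := by
    rw [hψ]
    push_cast
    ring
  rw [harg, Complex.exp_add, Complex.exp_two_pi_mul_I, mul_one]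

lemma exp_pi_div_two_I : Complex.exp (((π/2 : ℝ):ℂ) * Complex.I) = Complex.I := by
  rw [Complex.exp_mul_I, ← Complex.ofReal_cos, ← Complex.ofReal_sin,
    Real.cos_pi_div_two, Real.sin_pi_div_two]
  simp

lemma exp_three_pi_div_two_I : Complex.exp (((3*π/2 : ℝ):ℂ) * Complex.I) = -Complex.I := by
  rw [Complex.exp_mul_I, ← Complex.ofReal_cos, ← Complex.ofReal_sin,
    show (3*π/2 : ℝ) = π + π/2 by ring]
  simp [Real.cos_add, Real.sin_add]

lemma e5_pow : (Complex.exp (Complex.I * ((5*π/8 : ℝ):ℂ)))^4 = Complex.I := by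
  rw [exp_pow_aux (5*π/8) (π/2) (by ring)]
  exact exp_pi_div_two_I

lemma e7_pow : (Complex.exp (Complex.I * ((7*π/8 : ℝ):ℂ)))^4 = -Complex.I := by
  rw [exp_pow_aux (7*π/8) (3*π/2) (by ring)]
  exact exp_three_pi_div_two_I

lemma e1_pow : (Complex.exp (Complex.I * ((π/8 : ℝ):ℂ)))^4 = Complex.I := by
  rw [show (Complex.exp (Complex.I * ((π/8 : ℝ):ℂ)))^4 = Complex.exp ((4:ℕ)*(Complex.I * ((π/8 : ℝ):ℂ))) from (Complex.exp_nat_mul _ 4).symm]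
  rw [show ((4:ℕ):ℂ)*(Complex.I * ((π/8 : ℝ):ℂ)) = ((π/2 : ℝ):ℂ) * Complex.I by push_cast; ring]
  exact exp_pi_div_two_I

lemma e3_pow : (Complex.exp (Complex.I * ((3*π/8 : ℝ):ℂ)))^4 = -Complex.I := by
  rw [show (Complex.exp (Complex.I * ((3*π/8 : ℝ):ℂ)))^4 = Complex.exp ((4:ℕ)*(Complex.I * ((3*π/8 : ℝ):ℂ))) from (Complex.exp_nat_mul _ 4).symm]
  rw [show ((4:ℕ):ℂ)*(Complex.I * ((3*π/8 : ℝ):ℂ)) = ((3*π/2 : ℝ):ℂ) * Complex.I by push_cast; ring]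
  exact exp_three_pi_div_two_I

lemma G_integrand (g₀ : ℝ → ℂ) (hg₀ : Continuous g₀) (t T : ℝ) {e1 e2 : ℂ}
    (h1 : e1^4 = Complex.I) (h2 : e2^4 = -Complex.I) (r : ℝ) :
    (Complex.exp (-(((r:ℂ)*e1)^4)*(t:ℂ)) * ((r:ℂ)*e1)^3 * ttr g₀ (((r:ℂ)*e1)^4) T) * e1
      - (Complex.exp (-(((r:ℂ)*e2)^4)*(t:ℂ)) * ((r:ℂ)*e2)^3 * ttr g₀ (((r:ℂ)*e2)^4) T) * e2
      = ((4*r^3 : ℝ)) • ((Complex.I/4) * Kf g₀ t T (r^4)) := by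
  set w : ℂ := Complex.I*((r^4:ℝ):ℂ) with hw
  have a1 : ((r:ℂ)*e1)^4 = w := by rw [hw, mul_pow, h1]; push_cast; ring
  have a2 : ((r:ℂ)*e2)^4 = -w := by rw [hw, mul_pow, h2]; push_cast; ring
  have hii1 : IntervalIntegrable (fun τ : ℝ => Complex.exp (w*((τ:ℂ)-(t:ℂ))) * g₀ τ) volume 0 T := by
    apply Continuous.intervalIntegrable
    exact (Complex.continuous_exp.comp (continuous_const.mul
      ((Complex.continuous_ofReal).sub continuous_const))).mul hg₀
  have hii2 : IntervalIntegrable (fun τ : ℝ => Complex.exp (-w*((τ:ℂ)-(t:ℂ))) * g₀ τ) volume 0 T := by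
    apply Continuous.intervalIntegrable
    exact (Complex.continuous_exp.comp (continuous_const.mul
      ((Complex.continuous_ofReal).sub continuous_const))).mul hg₀
  have hKf : Kf g₀ t T (r^4)
      = (∫ τ in (0:ℝ)..T, Complex.exp (w*((τ:ℂ)-(t:ℂ))) * g₀ τ)
        + ∫ τ in (0:ℝ)..T, Complex.exp (-w*((τ:ℂ)-(t:ℂ))) * g₀ τ := by
    rw [Kf, ← intervalIntegral.integral_add hii1 hii2]
    apply intervalIntegral.integral_congr
    intro τ _
    dsimp only
    rw [hw]
    ring
  calc (Complex.exp (-(((r:ℂ)*e1)^4)*(t:ℂ)) * ((r:ℂ)*e1)^3 * ttr g₀ (((r:ℂ)*e1)^4) T) * e1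
      - (Complex.exp (-(((r:ℂ)*e2)^4)*(t:ℂ)) * ((r:ℂ)*e2)^3 * ttr g₀ (((r:ℂ)*e2)^4) T) * e2
      = (Complex.exp (-w*(t:ℂ)) * ttr g₀ w T) * ((r:ℂ)^3 * e1^4)
        - (Complex.exp (-(-w)*(t:ℂ)) * ttr g₀ (-w) T) * ((r:ℂ)^3 * e2^4) := by
        rw [a1, a2]; ring
    _ = (∫ τ in (0:ℝ)..T, Complex.exp (w*((τ:ℂ)-(t:ℂ))) * g₀ τ) * ((r:ℂ)^3 * Complex.I)
        - (∫ τ in (0:ℝ)..T, Complex.exp (-w*((τ:ℂ)-(t:ℂ))) * g₀ τ) * ((r:ℂ)^3 * (-Complex.I)) := by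
        rw [h1, h2, ttr_shift g₀ hg₀ t T w, ttr_shift g₀ hg₀ t T (-w)]
    _ = ((4*r^3 : ℝ)) • ((Complex.I/4) * Kf g₀ t T (r^4)) := by
        rw [hKf, Complex.real_smul]
        push_cast
        ring

lemma trunc_subst (g₀ : ℝ → ℂ) (hg₀ : Continuous g₀) (t T A : ℝ) :
    (∫ r in (0:ℝ)..A, ((4*r^3 : ℝ)) • ((Complex.I/4) * Kf g₀ t T (r^4)))
      = (Complex.I/4) * ∫ s in (0:ℝ)..(A^4), Kf g₀ t T s := by
  have hsub := intervalIntegral.integral_comp_smul_deriv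
    (a := (0:ℝ)) (b := A) (f := fun r => r^4) (f' := fun r => 4*r^3)
    (g := fun s => (Complex.I/4) * Kf g₀ t T s)
    (fun x _ => by simpa using hasDerivAt_pow 4 x)
    (Continuous.continuousOn (by fun_prop))
    (continuous_const.mul (Kf_cont g₀ hg₀ t T))
  have h2 : (∫ x in ((0:ℝ)^4)..(A^4), (Complex.I/4) * Kf g₀ t T x)
      = ∫ s in (0:ℝ)..(A^4), (Complex.I/4) * Kf g₀ t T s := by norm_num
  rw [← intervalIntegral.integral_const_mul]
  exact hsub.trans h2

/-- for `0 < t < T`,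
`(2-2i)∫_{Γ₁} e^{-λ⁴t} λ³ g̃₀(λ⁴,T) dλ + (-2-2i)∫_{Γ₂} e^{-λ⁴t} λ³ g̃₀(λ⁴,T) dλ = 2π g₀(t)`,
the contour integrals being improper limits of the truncated integrals as `A → ∞`. -/
theorem stmt6 (g₀ : ℝ → ℂ) (hg₀ : ContDiff ℝ (⊤ : ℕ∞) g₀) (T t : ℝ) (ht : 0 < t) (htT : t < T) :
    ∃ I₁ I₂ : ℂ,
      Tendsto (G1trunc fun l => Complex.exp (-(l ^ 4) * (t:ℂ)) * l ^ 3 * ttr g₀ (l ^ 4) T)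
        atTop (𝓝 I₁) ∧
      Tendsto (G2trunc fun l => Complex.exp (-(l ^ 4) * (t:ℂ)) * l ^ 3 * ttr g₀ (l ^ 4) T)
        atTop (𝓝 I₂) ∧
      (2 - 2 * Complex.I) * I₁ + (-2 - 2 * Complex.I) * I₂ = 2 * (π:ℂ) * g₀ t := by

  have hc : Continuous g₀ := hg₀.continuous
  set X : ℂ := 2 * (π:ℂ) * g₀ t with hX
  have hKtend : Tendsto (fun B : ℝ => ∫ s in (0:ℝ)..B, Kf g₀ t T s) atTop (𝓝 X) := by
    refine (kernel_tendsto g₀ hg₀ ht htT).congr' ?_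
    filter_upwards [eventually_gt_atTop (0:ℝ)] with B hB
    exact (Kf_integral_eq g₀ hc ht htT hB).symm
  have hpow : Tendsto (fun A : ℝ => A^4) atTop atTop := tendsto_pow_atTop (by norm_num)
  have hcomp : Tendsto (fun A : ℝ => (Complex.I/4) * ∫ s in (0:ℝ)..(A^4), Kf g₀ t T s)
      atTop (𝓝 ((Complex.I/4) * X)) := ((hKtend.comp hpow).const_mul _)
  have hG1 : ∀ A : ℝ, G1trunc (fun l => Complex.exp (-(l ^ 4) * (t:ℂ)) * l ^ 3 * ttr g₀ (l ^ 4) T) A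
      = (Complex.I/4) * ∫ s in (0:ℝ)..(A^4), Kf g₀ t T s := by
    intro A
    rw [← trunc_subst g₀ hc t T A, G1trunc]
    exact intervalIntegral.integral_congr (fun r _ => G_integrand g₀ hc t T e5_pow e7_pow r)
  have hG2 : ∀ A : ℝ, G2trunc (fun l => Complex.exp (-(l ^ 4) * (t:ℂ)) * l ^ 3 * ttr g₀ (l ^ 4) T) A
      = (Complex.I/4) * ∫ s in (0:ℝ)..(A^4), Kf g₀ t T s := by
    intro A
    rw [← trunc_subst g₀ hc t T A, G2trunc]
    exact intervalIntegral.integral_congr (fun r _ => G_integrand g₀ hc t T e1_pow e3_pow r)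
  refine ⟨(Complex.I/4) * X, (Complex.I/4) * X, ?_, ?_, ?_⟩
  · exact hcomp.congr (fun A => (hG1 A).symm)
  · exact hcomp.congr (fun A => (hG2 A).symm)
  · rw [hX]
    linear_combination (-(2*(π:ℂ)*g₀ t)) * Complex.I_sq
end
end

section
/- Let α ≥ 0 and β > 0. Suppose W : Q̄ ∖ {(0,0)} → ℝ is C⁴ and satisfies ∂_t W = α ∂_x² W − β ∂_x⁴ W on Q̄ ∖ {(0,0)}, with W(x,0) = 0 for all x > 0 and W(0,t) = ∂_x W(0,t) = 0 for all t > 0. Assume that for each t > 0, lim_{x→∞} W(x,t) = lim_{x→∞} ∂_x W(x,t) = 0 and sup_{x≥1} |∂_x² W(x,t)| < ∞, sup_{x≥1} |∂_x³ W(x,t)| < ∞; and that for every T > 0 there is a function B_T : (0,∞) → [0,∞) with ∫₀^∞ B_T(x) dx < ∞ such that |W(x,t)|², |∂_t W(x,t)|², |∂_x W(x,t)|², |∂_x² W(x,t)|², |∂_x³ W(x,t)|² ≤ B_T(x) for all x > 0 and 0 < t ≤ T. Then W ≡ 0. -/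
/-!
Energy method. For `E(t) = ∫₀^∞ W(x,t)² dx`, differentiating under the integral and using the
equation gives `E'(t) = 2α ∫ W ∂ₓ²W - 2β ∫ W ∂ₓ⁴W`. Integrating by parts, with the boundary
terms killed by `W = ∂ₓW = 0` at `x = 0` and by the decay at `x = ∞`, turns this into
`-2α ∫ (∂ₓW)² - 2β ∫ (∂ₓ²W)² ≤ 0`. So `E` is nonincreasing, and since `E(t) → 0` as `t → 0⁺`
by dominated convergence, `E ≡ 0`; continuity then forces `W = 0`.
-/

open MeasureTheory Filter Complex Real Set Topology

noncomputable section

/-- The closed quarter-plane `Q̄ = [0,∞) × [0,∞)`. -/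
def Qbar : Set (ℝ × ℝ) := {p : ℝ × ℝ | 0 ≤ p.1 ∧ 0 ≤ p.2}

/-- The `k`-th spatial derivative taken within `[0,∞)` (agreeing with the ordinary derivative at
interior points). -/
def DxW (W : ℝ → ℝ → ℝ) (k : ℕ) (x t : ℝ) : ℝ :=
  iteratedDerivWithin k (fun y => W y t) (Ici 0) x

/-- The time derivative taken within `[0,∞)`. -/
def DtW (W : ℝ → ℝ → ℝ) (x t : ℝ) : ℝ :=
  derivWithin (fun s => W x s) (Ici 0) t

theorem abs_mul_le_of_sq_le {a b c : ℝ} (ha : a ^ 2 ≤ c) (hb : b ^ 2 ≤ c) : |a * b| ≤ c := by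
  rw [abs_mul]
  nlinarith [two_mul_le_add_sq |a| |b|, sq_abs a, sq_abs b]

section Integrability

variable {X : Type*} [MeasurableSpace X] {μ : Measure X} {s : Set X} {f g B : X → ℝ}

theorem integrableOn_mul_of_sq_le (hs : MeasurableSet s) (hB : IntegrableOn B s μ)
    (hf : AEStronglyMeasurable f (μ.restrict s)) (hg : AEStronglyMeasurable g (μ.restrict s))
    (hfB : ∀ x ∈ s, f x ^ 2 ≤ B x) (hgB : ∀ x ∈ s, g x ^ 2 ≤ B x) :
    IntegrableOn (fun x => f x * g x) s μ :=
  hB.mono' (hf.mul hg) <| ae_restrict_of_forall_mem hs fun x hx =>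
    abs_mul_le_of_sq_le (hfB x hx) (hgB x hx)

theorem integrableOn_sq_of_sq_le (hs : MeasurableSet s) (hB : IntegrableOn B s μ)
    (hf : AEStronglyMeasurable f (μ.restrict s)) (hfB : ∀ x ∈ s, f x ^ 2 ≤ B x) :
    IntegrableOn (fun x => f x ^ 2) s μ :=
  (integrableOn_mul_of_sq_le hs hB hf hf hfB hfB).congr_fun (fun x _ => (sq (f x)).symm) hs

theorem eqOn_zero_of_setIntegral_eq_zero [TopologicalSpace X] [OpensMeasurableSpace X]
    [μ.IsOpenPosMeasure] {U : Set X} (hU : IsOpen U) (hf : ContinuousOn f U)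
    (hf0 : ∀ x ∈ U, 0 ≤ f x) (hfi : IntegrableOn f U μ) (h : ∫ x in U, f x ∂μ = 0) :
    EqOn f 0 U :=
  Measure.eqOn_open_of_ae_eq
    ((setIntegral_eq_zero_iff_of_nonneg_ae (ae_restrict_of_forall_mem hU.measurableSet hf0)
      hfi).1 h) hU hf continuousOn_const

end Integrability

theorem hasDerivAt_iteratedDerivWithin {f : ℝ → ℝ} {s : Set ℝ} {n : WithTop ℕ∞} {k : ℕ} {x : ℝ}
    (hf : ContDiffOn ℝ n f s) (hs : UniqueDiffOn ℝ s) (hk : k < n) (hx : s ∈ 𝓝 x) :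
    HasDerivAt (iteratedDerivWithin k f s) (iteratedDerivWithin (k + 1) f s x) x := by
  have h := (hf.differentiableOn_iteratedDerivWithin hk hs x (mem_of_mem_nhds hx)).hasDerivWithinAt
  rw [← iteratedDerivWithin_succ] at h
  exact h.hasDerivAt hx

theorem integral_Ioi_mul_deriv_eq_neg {f f' g g' : ℝ → ℝ} {a : ℝ}
    (hfa : ContinuousWithinAt f (Ici a) a) (hga : ContinuousWithinAt g (Ici a) a)
    (hf : ∀ x ∈ Ioi a, HasDerivAt f (f' x) x) (hg : ∀ x ∈ Ioi a, HasDerivAt g (g' x) x)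
    (hfg' : IntegrableOn (fun x => f x * g' x) (Ioi a))
    (hf'g : IntegrableOn (fun x => f' x * g x) (Ioi a))
    (ha : f a * g a = 0) (htop : Tendsto (fun x => f x * g x) atTop (𝓝 0)) :
    ∫ x in Ioi a, f x * g' x = -∫ x in Ioi a, f' x * g x := by
  have h0 : Tendsto (f * g) (𝓝[>] a) (𝓝 0) := by
    simpa only [Pi.mul_apply, ha] using
      (hfa.mul hga).tendsto.mono_left (nhdsWithin_mono a Ioi_subset_Ici_self)
  rw [integral_Ioi_mul_deriv_eq_deriv_mul hf hg hfg' hf'g h0 htop]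
  ring

theorem nonpos_of_tendsto_nhdsGT_of_hasDerivAt_nonpos {E E' : ℝ → ℝ} {a b t : ℝ}
    (hE : ∀ τ ∈ Ioo a b, HasDerivAt E (E' τ) τ) (hE' : ∀ τ ∈ Ioo a b, E' τ ≤ 0)
    (ha : Tendsto E (𝓝[>] a) (𝓝 0)) (ht : t ∈ Ioo a b) : E t ≤ 0 := by
  have hanti : AntitoneOn E (Ioo a b) := by
    refine antitoneOn_of_hasDerivWithinAt_nonpos (f' := E') (convex_Ioo a b)
      (fun τ hτ => (hE τ hτ).continuousAt.continuousWithinAt) (fun τ hτ => ?_) (fun τ hτ => ?_)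
    all_goals rw [interior_Ioo] at hτ
    exacts [(hE τ hτ).hasDerivWithinAt, hE' τ hτ]
  refine ge_of_tendsto ha ?_
  filter_upwards [Ioo_mem_nhdsGT ht.1] with τ hτ
  exact hanti ⟨hτ.1, hτ.2.trans ht.2⟩ ht hτ.2.le

theorem integral_Ioi_mul_iteratedDerivWithin_two_four {u : ℝ → ℝ}
    (hu : ContDiffOn ℝ 4 u (Ici 0)) (hu0 : u 0 = 0) (hu'0 : iteratedDerivWithin 1 u (Ici 0) 0 = 0)
    (hu_top : Tendsto u atTop (𝓝 0))
    (hu'_top : Tendsto (iteratedDerivWithin 1 u (Ici 0)) atTop (𝓝 0))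
    (hu''_top : IsBoundedUnder (· ≤ ·) atTop fun x => ‖iteratedDerivWithin 2 u (Ici 0) x‖)
    (hu'''_top : IsBoundedUnder (· ≤ ·) atTop fun x => ‖iteratedDerivWithin 3 u (Ici 0) x‖)
    (hint : ∀ j ≤ 3, ∀ k ≤ 3, IntegrableOn
      (fun x => iteratedDerivWithin j u (Ici 0) x * iteratedDerivWithin k u (Ici 0) x) (Ioi 0))
    (h04 : IntegrableOn (fun x => u x * iteratedDerivWithin 4 u (Ici 0) x) (Ioi 0)) :
    ∫ x in Ioi 0, u x * iteratedDerivWithin 2 u (Ici 0) x =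
        -∫ x in Ioi 0, iteratedDerivWithin 1 u (Ici 0) x * iteratedDerivWithin 1 u (Ici 0) x ∧
      ∫ x in Ioi 0, u x * iteratedDerivWithin 4 u (Ici 0) x =
        ∫ x in Ioi 0, iteratedDerivWithin 2 u (Ici 0) x * iteratedDerivWithin 2 u (Ici 0) x := by
  set D : ℕ → ℝ → ℝ := fun k => iteratedDerivWithin k u (Ici 0)
  have hD0 : D 0 = u := iteratedDerivWithin_zero
  have hDk : ∀ k, iteratedDerivWithin k u (Ici 0) = D k := fun k => rfl
  simp only [hDk] at hu'0 hu'_top hu''_top hu'''_top hint h04 ⊢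
  rw [← hD0] at hu0 hu_top h04 ⊢
  have hcont : ∀ k ≤ 4, ContinuousWithinAt (D k) (Ici 0) 0 := fun k hk =>
    hu.continuousOn_iteratedDerivWithin (by exact_mod_cast hk) (uniqueDiffOn_Ici 0) 0 self_mem_Ici
  have hderiv : ∀ k < 4, ∀ x ∈ Ioi (0 : ℝ), HasDerivAt (D k) (D (k + 1) x) x := fun k hk x hx =>
    hasDerivAt_iteratedDerivWithin hu (uniqueDiffOn_Ici 0) (by exact_mod_cast hk) (Ici_mem_nhds hx)
  have e02 : ∫ x in Ioi 0, D 0 x * D 2 x = -∫ x in Ioi 0, D 1 x * D 1 x :=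
    integral_Ioi_mul_deriv_eq_neg (hcont 0 (by norm_num)) (hcont 1 (by norm_num))
      (hderiv 0 (by norm_num)) (hderiv 1 (by norm_num)) (hint 0 (by norm_num) 2 (by norm_num))
      (hint 1 (by norm_num) 1 (by norm_num)) (by rw [hu0, zero_mul])
      (by simpa only [mul_zero] using hu_top.mul hu'_top)
  have e04 : ∫ x in Ioi 0, D 0 x * D 4 x = -∫ x in Ioi 0, D 1 x * D 3 x :=
    integral_Ioi_mul_deriv_eq_neg (hcont 0 (by norm_num)) (hcont 3 (by norm_num))
      (hderiv 0 (by norm_num)) (hderiv 3 (by norm_num)) h04 (hint 1 (by norm_num) 3 (by norm_num))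
      (by rw [hu0, zero_mul]) (hu_top.zero_mul_isBoundedUnder_le hu'''_top)
  have e13 : ∫ x in Ioi 0, D 1 x * D 3 x = -∫ x in Ioi 0, D 2 x * D 2 x :=
    integral_Ioi_mul_deriv_eq_neg (hcont 1 (by norm_num)) (hcont 2 (by norm_num))
      (hderiv 1 (by norm_num)) (hderiv 2 (by norm_num)) (hint 1 (by norm_num) 3 (by norm_num))
      (hint 2 (by norm_num) 2 (by norm_num)) (by rw [hu'0, zero_mul])
      (hu'_top.zero_mul_isBoundedUnder_le hu''_top)
  rw [e04, e13, neg_neg]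
  exact ⟨e02, rfl⟩

theorem setIntegral_mul_fourthOrder_nonpos {α β : ℝ} (hα : 0 ≤ α) (hβ : 0 < β)
    {u v B : ℝ → ℝ} (hu : ContDiffOn ℝ 4 u (Ici 0)) (hv : ContinuousOn v (Ioi 0))
    (heq : ∀ x ∈ Ioi (0 : ℝ), v x =
      α * iteratedDerivWithin 2 u (Ici 0) x - β * iteratedDerivWithin 4 u (Ici 0) x)
    (hu0 : u 0 = 0) (hu'0 : iteratedDerivWithin 1 u (Ici 0) 0 = 0)
    (hu_top : Tendsto u atTop (𝓝 0))
    (hu'_top : Tendsto (iteratedDerivWithin 1 u (Ici 0)) atTop (𝓝 0))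
    (hu''_top : IsBoundedUnder (· ≤ ·) atTop fun x => ‖iteratedDerivWithin 2 u (Ici 0) x‖)
    (hu'''_top : IsBoundedUnder (· ≤ ·) atTop fun x => ‖iteratedDerivWithin 3 u (Ici 0) x‖)
    (hB : IntegrableOn B (Ioi 0)) (hvB : ∀ x ∈ Ioi (0 : ℝ), v x ^ 2 ≤ B x)
    (huB : ∀ k ≤ 3, ∀ x ∈ Ioi (0 : ℝ), iteratedDerivWithin k u (Ici 0) x ^ 2 ≤ B x) :
    ∫ x in Ioi 0, u x * v x ≤ 0 := by
  have hmeas : ∀ k ≤ 3, AEStronglyMeasurable (iteratedDerivWithin k u (Ici 0))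
      (volume.restrict (Ioi 0)) := fun k hk =>
    ((hu.continuousOn_iteratedDerivWithin (by exact_mod_cast hk.trans (by norm_num))
      (uniqueDiffOn_Ici 0)).mono Ioi_subset_Ici_self).aestronglyMeasurable measurableSet_Ioi
  have hint : ∀ j ≤ 3, ∀ k ≤ 3, IntegrableOn
      (fun x => iteratedDerivWithin j u (Ici 0) x * iteratedDerivWithin k u (Ici 0) x) (Ioi 0) :=
    fun j hj k hk => integrableOn_mul_of_sq_le measurableSet_Ioi hB (hmeas j hj) (hmeas k hk)
      (huB j hj) (huB k hk)
  have hu_eq : iteratedDerivWithin 0 u (Ici 0) = u := iteratedDerivWithin_zero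
  have h02 := hint 0 (by norm_num) 2 (by norm_num)
  rw [hu_eq] at h02
  have huv : IntegrableOn (fun x => u x * v x) (Ioi 0) :=
    integrableOn_mul_of_sq_le measurableSet_Ioi hB (hu_eq ▸ hmeas 0 (by norm_num))
      (hv.aestronglyMeasurable measurableSet_Ioi) (hu_eq ▸ huB 0 (by norm_num)) hvB
  -- no bound on `∂ₓ⁴u` is assumed: the equation trades it for `∂ₓ²u` and `v`
  have h04 : IntegrableOn (fun x => u x * iteratedDerivWithin 4 u (Ici 0) x) (Ioi 0) := by
    have h : IntegrableOn
        (fun x => (α * (u x * iteratedDerivWithin 2 u (Ici 0) x) - u x * v x) / β) (Ioi 0) :=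
      ((h02.const_mul α).sub huv).div_const β
    refine h.congr_fun (fun x hx => ?_) measurableSet_Ioi
    simp only [heq x hx]
    field_simp
    ring
  obtain ⟨e2, e4⟩ := integral_Ioi_mul_iteratedDerivWithin_two_four hu hu0 hu'0 hu_top hu'_top
    hu''_top hu'''_top hint h04
  have hsplit : ∫ x in Ioi 0, u x * v x = ∫ x in Ioi 0,
      (α * (u x * iteratedDerivWithin 2 u (Ici 0) x) -
        β * (u x * iteratedDerivWithin 4 u (Ici 0) x)) :=
    setIntegral_congr_fun measurableSet_Ioi fun x hx => by
      simp only [heq x hx]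
      ring
  have h11 :
      0 ≤ ∫ x in Ioi 0, iteratedDerivWithin 1 u (Ici 0) x * iteratedDerivWithin 1 u (Ici 0) x :=
    setIntegral_nonneg measurableSet_Ioi fun _ _ => mul_self_nonneg _
  have h22 :
      0 ≤ ∫ x in Ioi 0, iteratedDerivWithin 2 u (Ici 0) x * iteratedDerivWithin 2 u (Ici 0) x :=
    setIntegral_nonneg measurableSet_Ioi fun _ _ => mul_self_nonneg _
  rw [hsplit, integral_sub (h02.const_mul α) (h04.const_mul β), integral_const_mul,
    integral_const_mul, e2, e4]
  nlinarith [mul_nonneg hα h11, mul_nonneg hβ.le h22]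

section Slices

variable {W : ℝ → ℝ → ℝ} {n : WithTop ℕ∞}

theorem contDiffOn_space_slice
    (hreg : ContDiffOn ℝ n (fun p : ℝ × ℝ => W p.1 p.2) (Qbar \ {(0, 0)}))
    {t : ℝ} (ht : 0 < t) : ContDiffOn ℝ n (fun x => W x t) (Ici 0) :=
  hreg.comp (contDiff_id.prodMk contDiff_const).contDiffOn fun _ hx =>
    ⟨⟨hx, ht.le⟩, fun h => ht.ne' (Prod.ext_iff.1 h).2⟩

theorem contDiffOn_time_slice
    (hreg : ContDiffOn ℝ n (fun p : ℝ × ℝ => W p.1 p.2) (Qbar \ {(0, 0)}))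
    {x : ℝ} (hx : 0 < x) : ContDiffOn ℝ n (fun t => W x t) (Ici 0) :=
  hreg.comp (contDiff_const.prodMk contDiff_id).contDiffOn fun _ ht =>
    ⟨⟨hx.le, ht⟩, fun h => hx.ne' (Prod.ext_iff.1 h).1⟩

theorem hasDerivAt_time_slice
    (hreg : ContDiffOn ℝ n (fun p : ℝ × ℝ => W p.1 p.2) (Qbar \ {(0, 0)})) (hn : 1 ≤ n)
    {x t : ℝ} (hx : 0 < x) (ht : 0 < t) : HasDerivAt (fun s => W x s) (DtW W x t) t :=
  ((contDiffOn_time_slice hreg hx).differentiableOn (zero_lt_one.trans_le hn).ne' t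
    ht.le).hasDerivWithinAt.hasDerivAt (Ici_mem_nhds ht)

theorem continuousOn_DtW
    (hreg : ContDiffOn ℝ n (fun p : ℝ × ℝ => W p.1 p.2) (Qbar \ {(0, 0)})) (hn : 1 ≤ n)
    {t : ℝ} (ht : 0 < t) : ContinuousOn (fun x => DtW W x t) (Ioi 0) := by
  set F : ℝ × ℝ → ℝ := fun p => W p.1 p.2
  have hU : IsOpen (Ioi (0 : ℝ) ×ˢ Ioi (0 : ℝ)) := isOpen_Ioi.prod isOpen_Ioi
  have hregU : ContDiffOn ℝ n F (Ioi 0 ×ˢ Ioi 0) :=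
    hreg.mono fun p hp => ⟨⟨hp.1.out.le, hp.2.out.le⟩, fun h => hp.1.out.ne' (Prod.ext_iff.1 h).1⟩
  have hDt : EqOn (fun x => DtW W x t) (fun x => fderiv ℝ F (x, t) (0, 1)) (Ioi 0) := by
    intro x hx
    have hF : DifferentiableAt ℝ F (x, t) :=
      (hregU.contDiffAt (hU.mem_nhds (mk_mem_prod hx ht))).differentiableAt
        (zero_lt_one.trans_le hn).ne'
    exact (hasDerivAt_time_slice hreg hn hx ht).unique
      (hF.hasFDerivAt.comp_hasDerivAt t ((hasDerivAt_const t x).prodMk (hasDerivAt_id t)))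
  refine ContinuousOn.congr ?_ hDt
  exact ((hregU.continuousOn_fderiv_of_isOpen hU hn).comp
    (continuous_id.prodMk continuous_const).continuousOn fun x hx => ⟨hx, ht⟩).clm_apply
    continuousOn_const

end Slices

def energy (W : ℝ → ℝ → ℝ) (t : ℝ) : ℝ := ∫ x in Ioi 0, W x t ^ 2

section Energy

variable {W : ℝ → ℝ → ℝ} {n : WithTop ℕ∞} {B : ℝ → ℝ} {T : ℝ}

theorem aestronglyMeasurable_space_slice
    (hreg : ContDiffOn ℝ n (fun p : ℝ × ℝ => W p.1 p.2) (Qbar \ {(0, 0)})) {t : ℝ} (ht : 0 < t) :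
    AEStronglyMeasurable (fun x => W x t) (volume.restrict (Ioi 0)) :=
  ((contDiffOn_space_slice hreg ht).continuousOn.mono Ioi_subset_Ici_self).aestronglyMeasurable
    measurableSet_Ioi

theorem hasDerivAt_energy
    (hreg : ContDiffOn ℝ n (fun p : ℝ × ℝ => W p.1 p.2) (Qbar \ {(0, 0)})) (hn : 1 ≤ n)
    (hB : IntegrableOn B (Ioi 0)) (hWB : ∀ x t, 0 < x → 0 < t → t ≤ T → W x t ^ 2 ≤ B x)
    (hDtB : ∀ x t, 0 < x → 0 < t → t ≤ T → DtW W x t ^ 2 ≤ B x) {τ : ℝ} (hτ : τ ∈ Ioo 0 T) :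
    HasDerivAt (energy W) (2 * ∫ x in Ioi 0, W x τ * DtW W x τ) τ := by
  have hnhds : Ioo 0 T ∈ 𝓝 τ := Ioo_mem_nhds hτ.1 hτ.2
  rw [← integral_const_mul]
  refine (hasDerivAt_integral_of_dominated_loc_of_deriv_le (μ := volume.restrict (Ioi 0))
    (F' := fun s x => 2 * (W x s * DtW W x s)) (bound := fun x => 2 * B x) hnhds
    (eventually_of_mem hnhds fun s hs => (aestronglyMeasurable_space_slice hreg hs.1).pow 2)
    (integrableOn_sq_of_sq_le measurableSet_Ioi hB (aestronglyMeasurable_space_slice hreg hτ.1)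
      fun x hx => hWB x τ hx hτ.1 hτ.2.le)
    (((aestronglyMeasurable_space_slice hreg hτ.1).mul
      ((continuousOn_DtW hreg hn hτ.1).aestronglyMeasurable measurableSet_Ioi)).const_mul 2)
    (ae_restrict_of_forall_mem measurableSet_Ioi fun x hx s hs => ?_) (hB.const_mul 2)
    (ae_restrict_of_forall_mem measurableSet_Ioi fun x hx s hs => ?_)).2
  · rw [norm_mul, Real.norm_two]
    exact mul_le_mul_of_nonneg_left
      (abs_mul_le_of_sq_le (hWB x s hx hs.1 hs.2.le) (hDtB x s hx hs.1 hs.2.le)) zero_le_two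
  · exact ((hasDerivAt_time_slice hreg hn hx hs.1).pow 2).congr_deriv (by ring)

theorem tendsto_energy_nhdsGT_zero
    (hreg : ContDiffOn ℝ n (fun p : ℝ × ℝ => W p.1 p.2) (Qbar \ {(0, 0)}))
    (hinit : ∀ x, 0 < x → W x 0 = 0) (hB : IntegrableOn B (Ioi 0))
    (hWB : ∀ x t, 0 < x → 0 < t → t ≤ T → W x t ^ 2 ≤ B x) (hT : 0 < T) :
    Tendsto (energy W) (𝓝[>] 0) (𝓝 0) := by
  have h := tendsto_integral_filter_of_dominated_convergence (μ := volume.restrict (Ioi 0))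
    (F := fun s x => W x s ^ 2) (f := fun _ => 0) B
    (eventually_of_mem (Ioo_mem_nhdsGT hT) fun s hs =>
      (aestronglyMeasurable_space_slice hreg hs.1).pow 2)
    (eventually_of_mem (Ioo_mem_nhdsGT hT) fun s hs =>
      ae_restrict_of_forall_mem measurableSet_Ioi fun x hx => by
        simpa only [norm_pow, Real.norm_eq_abs, sq_abs] using hWB x s hx hs.1 hs.2.le)
    hB (ae_restrict_of_forall_mem measurableSet_Ioi fun x hx => ?_)
  · rwa [integral_zero] at h
  · have hcont := ((contDiffOn_time_slice hreg hx).continuousOn 0 self_mem_Ici).tendsto.mono_left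
      (nhdsWithin_mono 0 Ioi_subset_Ici_self)
    simpa [hinit x hx] using hcont.pow 2

theorem eq_zero_of_energy_eq_zero
    (hreg : ContDiffOn ℝ n (fun p : ℝ × ℝ => W p.1 p.2) (Qbar \ {(0, 0)})) {t : ℝ} (ht : 0 < t)
    (hB : IntegrableOn B (Ioi 0)) (hWB : ∀ x, 0 < x → W x t ^ 2 ≤ B x) (hE : energy W t = 0)
    {x : ℝ} (hx : 0 < x) : W x t = 0 :=
  pow_eq_zero_iff two_ne_zero |>.1 <| eqOn_zero_of_setIntegral_eq_zero isOpen_Ioi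
    (((contDiffOn_space_slice hreg ht).continuousOn.mono Ioi_subset_Ici_self).pow 2)
    (fun _ _ => sq_nonneg _)
    (integrableOn_sq_of_sq_le measurableSet_Ioi hB (aestronglyMeasurable_space_slice hreg ht) hWB)
    hE hx

theorem integral_mul_DtW_nonpos {α β : ℝ} (hα : 0 ≤ α) (hβ : 0 < β)
    (hreg : ContDiffOn ℝ 4 (fun p : ℝ × ℝ => W p.1 p.2) (Qbar \ {(0, 0)})) {t : ℝ} (ht : 0 < t)
    (hpde : ∀ x, 0 < x → DtW W x t = α * DxW W 2 x t - β * DxW W 4 x t)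
    (hbd : W 0 t = 0 ∧ DxW W 1 0 t = 0)
    (hinf : Tendsto (fun x => W x t) atTop (𝓝 0) ∧
      Tendsto (fun x => DxW W 1 x t) atTop (𝓝 0) ∧
      (∃ C : ℝ, ∀ x : ℝ, 1 ≤ x → |DxW W 2 x t| ≤ C) ∧
      (∃ C : ℝ, ∀ x : ℝ, 1 ≤ x → |DxW W 3 x t| ≤ C))
    (hB : IntegrableOn B (Ioi 0))
    (hbounds : ∀ x, 0 < x → W x t ^ 2 ≤ B x ∧ DtW W x t ^ 2 ≤ B x ∧
      DxW W 1 x t ^ 2 ≤ B x ∧ DxW W 2 x t ^ 2 ≤ B x ∧ DxW W 3 x t ^ 2 ≤ B x) :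
    ∫ x in Ioi 0, W x t * DtW W x t ≤ 0 := by
  obtain ⟨hW_top, hDx_top, ⟨C₂, hC₂⟩, ⟨C₃, hC₃⟩⟩ := hinf
  refine setIntegral_mul_fourthOrder_nonpos hα hβ (contDiffOn_space_slice hreg ht)
    (continuousOn_DtW hreg (by norm_num) ht) hpde hbd.1 hbd.2 hW_top hDx_top
    (isBoundedUnder_of_eventually_le (eventually_atTop.2 ⟨1, hC₂⟩))
    (isBoundedUnder_of_eventually_le (eventually_atTop.2 ⟨1, hC₃⟩))
    hB (fun x hx => (hbounds x hx).2.1) fun k hk x hx => ?_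
  obtain ⟨h₀, -, h₁, h₂, h₃⟩ := hbounds x hx
  interval_cases k
  exacts [by simpa only [iteratedDerivWithin_zero] using h₀, h₁, h₂, h₃]

end Energy

/-- the uniqueness assertion of Theorem 7: a `C⁴` solution `W` of
`∂_t W = α∂_x²W - β∂_x⁴W` on `Q̄ ∖ {(0,0)}` with zero initial and boundary data, vanishing
together with `∂_x W` at spatial infinity, with bounded second and third spatial derivatives
for `x ≥ 1`, and with squares of `W` and its derivatives dominated, uniformly in `0 < t ≤ T`,
by an integrable function of `x`, vanishes identically. -/
theorem stmt14 (α β : ℝ) (hα : 0 ≤ α) (hβ : 0 < β) (W : ℝ → ℝ → ℝ)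
    (hreg : ContDiffOn ℝ 4 (fun p : ℝ × ℝ => W p.1 p.2) (Qbar \ {(0, 0)}))
    (hpde : ∀ x t : ℝ, 0 ≤ x → 0 ≤ t → ¬(x = 0 ∧ t = 0) →
      DtW W x t = α * DxW W 2 x t - β * DxW W 4 x t)
    (hinit : ∀ x : ℝ, 0 < x → W x 0 = 0)
    (hbd : ∀ t : ℝ, 0 < t → W 0 t = 0 ∧ DxW W 1 0 t = 0)
    (hinf : ∀ t : ℝ, 0 < t →
      Tendsto (fun x => W x t) atTop (𝓝 0) ∧
      Tendsto (fun x => DxW W 1 x t) atTop (𝓝 0) ∧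
      (∃ C : ℝ, ∀ x : ℝ, 1 ≤ x → |DxW W 2 x t| ≤ C) ∧
      (∃ C : ℝ, ∀ x : ℝ, 1 ≤ x → |DxW W 3 x t| ≤ C))
    (hdom : ∀ T : ℝ, 0 < T → ∃ B : ℝ → ℝ, (∀ x : ℝ, 0 ≤ B x) ∧
      IntegrableOn B (Ioi 0) ∧
      ∀ x t : ℝ, 0 < x → 0 < t → t ≤ T →
        (W x t) ^ 2 ≤ B x ∧ (DtW W x t) ^ 2 ≤ B x ∧
        (DxW W 1 x t) ^ 2 ≤ B x ∧ (DxW W 2 x t) ^ 2 ≤ B x ∧ (DxW W 3 x t) ^ 2 ≤ B x) :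
    ∀ x t : ℝ, 0 ≤ x → 0 ≤ t → ¬(x = 0 ∧ t = 0) → W x t = 0 := by
  intro x t hx ht hxt
  rcases ht.eq_or_lt with rfl | ht
  · exact hinit x (hx.lt_of_ne fun h => hxt ⟨h.symm, rfl⟩)
  rcases hx.eq_or_lt with rfl | hx
  · exact (hbd t ht).1
  obtain ⟨B, -, hB, hBW⟩ := hdom (t + 1) (by linarith)
  have hWB := fun y s hy hs hsT => (hBW y s hy hs hsT).1
  have hE : energy W t ≤ 0 :=
    nonpos_of_tendsto_nhdsGT_of_hasDerivAt_nonpos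
      (fun τ hτ => hasDerivAt_energy hreg (by norm_num) hB hWB
        (fun y s hy hs hsT => (hBW y s hy hs hsT).2.1) hτ)
      (fun τ hτ => mul_nonpos_of_nonneg_of_nonpos zero_le_two <|
        integral_mul_DtW_nonpos hα hβ hreg hτ.1
          (fun y hy => hpde y τ hy.le hτ.1.le fun h => hy.ne' h.1) (hbd τ hτ.1) (hinf τ hτ.1) hB
          fun y hy => hBW y τ hy hτ.1 hτ.2.le)
      (tendsto_energy_nhdsGT_zero hreg hinit hB hWB (by linarith)) ⟨ht, by linarith⟩
  exact eq_zero_of_energy_eq_zero hreg ht hB (fun y hy => hWB y t hy ht (by linarith))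
    (le_antisymm hE (setIntegral_nonneg measurableSet_Ioi fun _ _ => sq_nonneg _)) hx
end
end

section
/- Let A > 0 and x₀ > 0, and let u₀ ∈ S([0,∞)) satisfy u₀(x) = e^{−Ax} for all x ≥ x₀. Then there exists an entire function E : ℂ → ℂ such that û₀(λ) = 1/(iλ + A) + E(λ) for all λ with Im λ ≤ 0; consequently, there is no entire function F : ℂ → ℂ with F(λ) = û₀(λ) for all λ with Im λ ≤ 0. -/
open MeasureTheory Filter Complex Real Set Topology

noncomputable section


lemma cexp_lin_hasDerivAt (c l : ℂ) :
    HasDerivAt (fun w : ℂ => Complex.exp (c * w)) (c * Complex.exp (c * l)) l := by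
  have h := ((hasDerivAt_id l).const_mul c).cexp
  simpa [mul_comm] using h

lemma dslope_exp_differentiable (c : ℂ) :
    Differentiable ℂ (dslope (fun w : ℂ => Complex.exp (c * w)) 0) := by
  set f : ℂ → ℂ := fun w => Complex.exp (c * w) with hf_def
  have hf : Differentiable ℂ f := (differentiable_id.const_mul c).cexp
  intro w
  rcases eq_or_ne w 0 with rfl | hw
  · obtain ⟨p, hp⟩ := hf.analyticAt 0
    exact hp.has_fpower_series_dslope_fslope.differentiableAt
  · have heq : dslope f 0 =ᶠ[𝓝 w] slope f 0 := dslope_eventuallyEq_slope_of_ne f hw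
    rw [heq.differentiableAt_iff]
    have hs : slope f 0 = fun b => (f b - f 0) / (b - 0) := funext fun b => slope_def_field f 0 b
    rw [hs]
    exact ((hf w).sub_const _).div (differentiableAt_id.sub_const _) (by simpa using hw)

lemma I1_differentiable (r : ℝ) (u₀ : ℝ → ℂ) (hcont : Continuous u₀) (C : ℝ)
    (hC : ∀ x : ℝ, 0 ≤ x → ‖u₀ x‖ ≤ C) :
    Differentiable ℂ (fun l : ℂ =>
      ∫ y in Ioc (0:ℝ) r, Complex.exp (-Complex.I * l * y) * u₀ y) := by
  intro l₀
  have hmul : ∀ (y : ℝ) (w : ℂ), (-Complex.I * (y:ℂ)) * w = -Complex.I * w * (y:ℂ) :=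
    fun y w => by ring
  have key := hasDerivAt_integral_of_dominated_loc_of_deriv_le
    (μ := volume.restrict (Ioc (0:ℝ) r))
    (F := fun (l : ℂ) (y : ℝ) => Complex.exp (-Complex.I * l * y) * u₀ y)
    (F' := fun (l : ℂ) (y : ℝ) => -Complex.I * (y:ℂ) * Complex.exp (-Complex.I * (y:ℂ) * l) * u₀ y)
    (x₀ := l₀)
    (bound := fun _ => |r| * Real.exp (|r| * (|l₀.im| + 1)) * C)
    (Metric.ball_mem_nhds l₀ one_pos) ?_ ?_ ?_ ?_ ?_ ?_
  · exact key.2.differentiableAt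
  · filter_upwards with l
    exact ((Complex.continuous_exp.comp (by continuity)).mul hcont).aestronglyMeasurable
  · exact (Continuous.integrableOn_Ioc ((Complex.continuous_exp.comp (by continuity)).mul hcont))
  · exact (((by continuity : Continuous (fun y : ℝ => -Complex.I * (y:ℂ) * Complex.exp (-Complex.I * (y:ℂ) * l₀)))).mul hcont).aestronglyMeasurable
  · -- bound
    filter_upwards [ae_restrict_mem measurableSet_Ioc] with y hy l hl
    have hy0 : 0 < y := hy.1
    have hyr : y ≤ r := hy.2
    have him : |l.im| ≤ |l₀.im| + 1 := by
      have h1 : |l.im - l₀.im| ≤ ‖l - l₀‖ := by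
        simpa using Complex.abs_im_le_norm (l - l₀)
      have h2 : ‖l - l₀‖ < 1 := by simpa [Complex.dist_eq] using mem_ball_iff_norm.mp hl
      calc |l.im| ≤ |l.im - l₀.im| + |l₀.im| := by
            simpa using abs_sub_abs_le_abs_sub l.im l₀.im |>.trans (le_refl _) |>.trans (le_refl _)
        _ ≤ |l₀.im| + 1 := by linarith
    have hnorm : ‖-Complex.I * (y:ℂ) * Complex.exp (-Complex.I * (y:ℂ) * l) * u₀ y‖
        = |y| * Real.exp (y * l.im) * ‖u₀ y‖ := by
      simp only [norm_mul, Complex.norm_exp]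
      have : (-Complex.I * (y:ℂ) * l).re = y * l.im := by
        simp [Complex.mul_re, Complex.mul_im]
      rw [this]
      simp
    rw [hnorm]
    have h3 : y * l.im ≤ |r| * (|l₀.im| + 1) := by
      calc y * l.im ≤ |y * l.im| := le_abs_self _
        _ = |y| * |l.im| := abs_mul _ _
        _ ≤ |r| * (|l₀.im| + 1) := by
            apply mul_le_mul _ him (abs_nonneg _) (abs_nonneg _)
            rw [abs_of_pos hy0]
            exact hyr.trans (le_abs_self r)
    have h4 : |y| ≤ |r| := by rw [abs_of_pos hy0]; exact hyr.trans (le_abs_self r)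
    have h5 : ‖u₀ y‖ ≤ C := hC y hy0.le
    gcongr
  · -- bound integrable
    exact ((integrableOn_const_iff (C := |r| * Real.exp (|r| * (|l₀.im| + 1)) * C)).mpr (Or.inr measure_Ioc_lt_top))
  · -- differentiability
    filter_upwards with y l _
    have h1 := (cexp_lin_hasDerivAt (-Complex.I * (y:ℂ)) l).mul_const (u₀ y)
    simpa only [hmul] using h1

lemma integrableOn_cexp_Ioi (z : ℂ) (hz : 0 < z.re) (a : ℝ) :
    IntegrableOn (fun y : ℝ => Complex.exp (-z * y)) (Ioi a) := by
  apply (exp_neg_integrableOn_Ioi a hz).mono'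
  · exact (Complex.continuous_exp.comp (by continuity)).aestronglyMeasurable
  · filter_upwards with y
    simp only [Complex.norm_exp]
    apply le_of_eq
    congr 1
    simp [Complex.mul_re]

lemma integral_cexp_Ioi (z : ℂ) (hz : 0 < z.re) (a : ℝ) :
    ∫ y in Ioi a, Complex.exp (-z * y) = Complex.exp (-z * a) / z := by
  have hz0 : z ≠ 0 := fun h => by simp [h] at hz
  have hderiv : ∀ y ∈ Ici a,
      HasDerivAt (fun y : ℝ => -Complex.exp (-z * y) / z) (Complex.exp (-z * y)) y := by
    intro y _
    have h1 : HasDerivAt (fun w : ℂ => -Complex.exp (-z * w) / z)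
        (Complex.exp (-z * (y:ℂ))) (y:ℂ) := by
      have := ((cexp_lin_hasDerivAt (-z) (y:ℂ)).neg).div_const z
      refine this.congr_deriv ?_
      field_simp
    exact h1.comp_ofReal
  have htend : Tendsto (fun y : ℝ => -Complex.exp (-z * y) / z) atTop (𝓝 0) := by
    rw [tendsto_zero_iff_norm_tendsto_zero]
    have : (fun y : ℝ => ‖-Complex.exp (-z * y) / z‖)
        = fun y : ℝ => Real.exp (-(z.re * y)) / ‖z‖ := by
      funext y
      simp [Complex.norm_exp, Complex.mul_re]
    rw [this]
    have h2 : Tendsto (fun y : ℝ => -(z.re * y)) atTop atBot := by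
      apply tendsto_neg_atBot_iff.mpr
      exact Tendsto.const_mul_atTop hz tendsto_id
    simpa using (Real.tendsto_exp_atBot.comp h2).div_const ‖z‖
  have := integral_Ioi_of_hasDerivAt_of_tendsto' hderiv (integrableOn_cexp_Ioi z hz a) htend
  rw [this]
  field_simp
  ring

/-- The half-line Schwartz class `S([0,∞))`. -/
def HSchwartz (u : ℝ → ℂ) : Prop :=
  ContDiff ℝ (⊤ : ℕ∞) u ∧ ∀ l n : ℕ, ∃ C : ℝ, ∀ x : ℝ, 0 ≤ x → x ^ l * ‖iteratedDeriv n u x‖ ≤ C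

/-- The half-line Fourier transform `û(λ) = ∫₀^∞ e^{-iλy} u(y) dy`. -/
def fhat (u : ℝ → ℂ) (l : ℂ) : ℂ := ∫ y in Ioi (0:ℝ), Complex.exp (-Complex.I * l * y) * u y

/-- if `u₀ ∈ S([0,∞))` equals `e^{-Ax}` for `x ≥ x₀`, then
`û₀(λ) = 1/(iλ + A) +` (an entire function) on `{Im λ ≤ 0}`; in particular `û₀` does not extend
to an entire function. -/
theorem stmt17 (A x₀ : ℝ) (hA : 0 < A) (hx₀ : 0 < x₀)
    (u₀ : ℝ → ℂ) (hu₀ : HSchwartz u₀)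
    (hexp : ∀ x : ℝ, x₀ ≤ x → u₀ x = Complex.exp (-(A:ℂ) * (x:ℂ))) :
    (∃ E : ℂ → ℂ, Differentiable ℂ E ∧
      ∀ l : ℂ, l.im ≤ 0 → fhat u₀ l = 1 / (Complex.I * l + (A:ℂ)) + E l) ∧
    ¬ ∃ F : ℂ → ℂ, Differentiable ℂ F ∧ ∀ l : ℂ, l.im ≤ 0 → F l = fhat u₀ l := by
  obtain ⟨hsmooth, hbounds⟩ := hu₀
  obtain ⟨C, hC0⟩ := hbounds 0 0
  have hC' : ∀ x : ℝ, 0 ≤ x → ‖u₀ x‖ ≤ C := by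
    intro x hx
    simpa [iteratedDeriv_zero] using hC0 x hx
  set f : ℂ → ℂ := fun w => Complex.exp (-(x₀:ℂ) * w) with hf_def
  set g : ℂ → ℂ := dslope f 0 with hg_def
  have hg : Differentiable ℂ g := dslope_exp_differentiable _
  set I1 : ℂ → ℂ := fun l => ∫ y in Ioc (0:ℝ) x₀, Complex.exp (-Complex.I * l * y) * u₀ y
    with hI1_def
  have hI1 : Differentiable ℂ I1 := I1_differentiable x₀ u₀ hsmooth.continuous C hC'
  set E : ℂ → ℂ := fun l => I1 l + g (Complex.I * l + A) with hE_def
  have hE : Differentiable ℂ E :=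
    hI1.add (hg.comp ((differentiable_id.const_mul _).add_const _))
  have hzre : ∀ l : ℂ, l.im ≤ 0 → 0 < (Complex.I * l + (A:ℂ)).re := by
    intro l hl
    simp only [Complex.add_re, Complex.mul_re, Complex.I_re, Complex.I_im, Complex.ofReal_re]
    simp only [zero_mul, one_mul, zero_sub]
    linarith
  have key : ∀ l : ℂ, l.im ≤ 0 → fhat u₀ l = 1 / (Complex.I * l + (A:ℂ)) + E l := by
    intro l hl
    set z : ℂ := Complex.I * l + (A:ℂ) with hz_def
    have hzre' : 0 < z.re := hzre l hl
    have hz0 : z ≠ 0 := fun h => by rw [h] at hzre'; simp at hzre'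
    have hEq : EqOn (fun y : ℝ => Complex.exp (-Complex.I * l * y) * u₀ y)
        (fun y : ℝ => Complex.exp (-z * y)) (Ioi x₀) := by
      intro y hy
      simp only
      rw [hexp y (le_of_lt hy), ← Complex.exp_add]
      congr 1
      rw [hz_def]
      push_cast
      ring
    have hint2 : IntegrableOn (fun y : ℝ => Complex.exp (-Complex.I * l * y) * u₀ y)
        (Ioi x₀) :=
      (integrableOn_cexp_Ioi z hzre' x₀).congr_fun hEq.symm measurableSet_Ioi
    have hint1 : IntegrableOn (fun y : ℝ => Complex.exp (-Complex.I * l * y) * u₀ y)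
        (Ioc (0:ℝ) x₀) :=
      Continuous.integrableOn_Ioc
        ((Complex.continuous_exp.comp (by continuity)).mul hsmooth.continuous)
    have hsplit : fhat u₀ l
        = I1 l + ∫ y in Ioi x₀, Complex.exp (-Complex.I * l * y) * u₀ y := by
      rw [fhat, ← Ioc_union_Ioi_eq_Ioi (le_of_lt hx₀),
        setIntegral_union (Ioc_disjoint_Ioi le_rfl) measurableSet_Ioi hint1 hint2]
    have htail : (∫ y in Ioi x₀, Complex.exp (-Complex.I * l * y) * u₀ y)
        = Complex.exp (-z * x₀) / z := by
      rw [setIntegral_congr_fun measurableSet_Ioi hEq]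
      exact integral_cexp_Ioi z hzre' x₀
    have hgz : g z = (Complex.exp (-z * x₀) - 1) / z := by
      rw [hg_def, dslope_of_ne f hz0, slope_def_field, hf_def]
      simp only
      rw [mul_zero, Complex.exp_zero, sub_zero,
        show -(x₀:ℂ) * z = -z * (x₀:ℂ) by ring]
    rw [hsplit, htail, hE_def]
    simp only
    rw [hgz]
    field_simp
    ring
  refine ⟨⟨E, hE, key⟩, ?_⟩
  rintro ⟨F, hF, hFeq⟩
  set H : ℂ → ℂ := fun l => (F l - E l) * (Complex.I * l + (A:ℂ)) - 1 with hH_def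
  have hH : Differentiable ℂ H :=
    ((hF.sub hE).mul ((differentiable_id.const_mul _).add_const _)).sub_const _
  have hzero : ∀ l : ℂ, l.im < 0 → H l = 0 := by
    intro l hl
    have h1 := key l hl.le
    have h2 := hFeq l hl.le
    have hz0 : Complex.I * l + (A:ℂ) ≠ 0 := by
      have := hzre l hl.le
      intro h
      rw [h] at this
      simp at this
    rw [hH_def]
    simp only
    rw [h2, h1]
    field_simp
    ring
  have hHanal : AnalyticOnNhd ℂ H univ := fun z _ => hH.analyticAt z
  have hev : H =ᶠ[𝓝 (-Complex.I)] 0 := by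
    have hopen : IsOpen {l : ℂ | l.im < 0} := isOpen_lt Complex.continuous_im continuous_const
    have hmem : (-Complex.I) ∈ {l : ℂ | l.im < 0} := by
      simp [Complex.neg_im, Complex.I_im]
    filter_upwards [hopen.mem_nhds hmem] with l hl using hzero l hl
  have hall : EqOn H 0 univ :=
    hHanal.eqOn_zero_of_preconnected_of_eventuallyEq_zero isPreconnected_univ (mem_univ _) hev
  have hcontr := hall (mem_univ ((A:ℂ) * Complex.I))
  rw [hH_def] at hcontr
  simp only [Pi.zero_apply] at hcontr
  have hzz : Complex.I * ((A:ℂ) * Complex.I) + (A:ℂ) = 0 := by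
    rw [show Complex.I * ((A:ℂ) * Complex.I) = (A:ℂ) * (Complex.I * Complex.I) by ring,
      Complex.I_mul_I]
    ring
  rw [hzz, mul_zero] at hcontr
  norm_num at hcontr
end
end
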